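/- Values of public types are self-related by the logical relation: if a simple type η has public kind in the empty context (· ⊢ η :: *@P), then for every closed value v with · ⊢ v : η, the pair (v, v) belongs to the step-indexed value interpretation ⟦η⟧ₙ for every n; conversely, if (v, v') ∈ ⟦η⟧ₙ for some n > 0, then v = v'. -/

import Mathlib

set_option autoImplicit true
set_option maxHeartbeats 1000000

namespace Taypsi

abbrev GName := String

/-- Kinds of `λ_OADTΨ`: `any ⊑ pub, obliv ⊑ mixed`. -/
inductive Kind : Type
  | any | pub | obliv | mixed
  deriving DecidableEq

/-- The semilattice order on kinds. -/
inductive Kind.le : Kind → Kind → Prop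
  | refl (κ : Kind) : Kind.le κ κ
  | bot (κ : Kind) : Kind.le .any κ
  | top (κ : Kind) : Kind.le κ .mixed

mutual
/-- Expressions (including types) of `λ_OADTΨ`, using de Bruijn indices. -/
inductive Expr : Type
  | unitTy                          -- `unit`
  | boolTy                          -- `bool`
  | oboolTy                         -- `@bool` (oblivious boolean type)
  | prodTy  (τ₁ τ₂ : Expr)          -- `τ₁ * τ₂`
  | osumTy  (τ₁ τ₂ : Expr)          -- `τ₁ @+ τ₂` (oblivious sum)
  | piTy    (τ₁ τ₂ : Expr)          -- `Πx:τ₁, τ₂` (`τ₂` binds one variable)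
  | psiTy   (T : GName)             -- `Ψ@T` (Ψ-type)
  | bvar    (i : ℕ)                 -- local variable
  | gvar    (x : GName)             -- global (function) name
  | adTy    (T : GName)             -- ADT name `T`
  | oadt    (T : GName) (e : Expr)  -- `@T e` (OADT applied to a public view)
  | unit                            -- `()`
  | lit     (b : Bool)              -- boolean literal
  | lam     (τ e : Expr)            -- `λx:τ. e` (`e` binds one variable)
  | letE    (e₁ e₂ : Expr)          -- `let x = e₁ in e₂` (`e₂` binds one variable)
  | app     (e₁ e₂ : Expr)          -- application
  | ctor    (C : GName) (e : Expr)  -- constructor application `C e`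
  | ite     (e₀ e₁ e₂ : Expr)       -- `if e₀ then e₁ else e₂`
  | mux     (e₀ e₁ e₂ : Expr)       -- oblivious conditional
  | pair    (e₁ e₂ : Expr)          -- `(e₁, e₂)`
  | psiPair (e₁ e₂ : Expr)          -- Ψ-pair `Ψ(e₁, e₂)`
  | proj    (b : Bool) (e : Expr)   -- `π₁ e` (`b = true`) / `π₂ e` (`b = false`), for pairs and Ψ-pairs
  | oinj    (b : Bool) (τ e : Expr) -- oblivious injection `@inl<τ> e` / `@inr<τ> e`
  | omatch  (e₀ e₁ e₂ : Expr)       -- oblivious sum elimination (each branch binds one variable)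
  | matchE  (e₀ : Expr) (alts : Alts) -- ADT elimination
  | boolSec (e : Expr)              -- boolean section `@bool#s e`
  | boxedLit (b : Bool)             -- runtime boxed (encrypted) boolean `[b]`
  | boxedInj (b : Bool) (w v : Expr) -- runtime boxed oblivious sum `[inj_b<@w> @v]`

/-- Lists of pattern-matching alternatives `C x => e` (each body binds one variable). -/
inductive Alts : Type
  | nil
  | cons (C : GName) (body : Expr) (rest : Alts)
end

namespace Expr

mutual
/-- Shift de Bruijn indices `≥ c` up by `d`. -/
def shiftE (d c : ℕ) : Expr → Expr
  | .unitTy => .unitTy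
  | .boolTy => .boolTy
  | .oboolTy => .oboolTy
  | .prodTy τ₁ τ₂ => .prodTy (shiftE d c τ₁) (shiftE d c τ₂)
  | .osumTy τ₁ τ₂ => .osumTy (shiftE d c τ₁) (shiftE d c τ₂)
  | .piTy τ₁ τ₂ => .piTy (shiftE d c τ₁) (shiftE d (c+1) τ₂)
  | .psiTy T => .psiTy T
  | .bvar i => if i < c then .bvar i else .bvar (i + d)
  | .gvar x => .gvar x
  | .adTy T => .adTy T
  | .oadt T e => .oadt T (shiftE d c e)
  | .unit => .unit
  | .lit b => .lit b
  | .lam τ e => .lam (shiftE d c τ) (shiftE d (c+1) e)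
  | .letE e₁ e₂ => .letE (shiftE d c e₁) (shiftE d (c+1) e₂)
  | .app e₁ e₂ => .app (shiftE d c e₁) (shiftE d c e₂)
  | .ctor C e => .ctor C (shiftE d c e)
  | .ite e₀ e₁ e₂ => .ite (shiftE d c e₀) (shiftE d c e₁) (shiftE d c e₂)
  | .mux e₀ e₁ e₂ => .mux (shiftE d c e₀) (shiftE d c e₁) (shiftE d c e₂)
  | .pair e₁ e₂ => .pair (shiftE d c e₁) (shiftE d c e₂)
  | .psiPair e₁ e₂ => .psiPair (shiftE d c e₁) (shiftE d c e₂)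
  | .proj b e => .proj b (shiftE d c e)
  | .oinj b τ e => .oinj b (shiftE d c τ) (shiftE d c e)
  | .omatch e₀ e₁ e₂ => .omatch (shiftE d c e₀) (shiftE d (c+1) e₁) (shiftE d (c+1) e₂)
  | .matchE e₀ alts => .matchE (shiftE d c e₀) (shiftA d c alts)
  | .boolSec e => .boolSec (shiftE d c e)
  | .boxedLit b => .boxedLit b
  | .boxedInj b w v => .boxedInj b (shiftE d c w) (shiftE d c v)

def shiftA (d c : ℕ) : Alts → Alts
  | .nil => .nil
  | .cons C body rest => .cons C (shiftE d (c+1) body) (shiftA d c rest)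
end

mutual
/-- Capture-avoiding substitution `[u / k]`: replace variable `k` by the
    (appropriately shifted) expression `u` and decrement the indices above `k`. -/
def substE (k : ℕ) (u : Expr) : Expr → Expr
  | .unitTy => .unitTy
  | .boolTy => .boolTy
  | .oboolTy => .oboolTy
  | .prodTy τ₁ τ₂ => .prodTy (substE k u τ₁) (substE k u τ₂)
  | .osumTy τ₁ τ₂ => .osumTy (substE k u τ₁) (substE k u τ₂)
  | .piTy τ₁ τ₂ => .piTy (substE k u τ₁) (substE (k+1) u τ₂)
  | .psiTy T => .psiTy T
  | .bvar i => if i < k then .bvar i else if i = k then shiftE k 0 u else .bvar (i - 1)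
  | .gvar x => .gvar x
  | .adTy T => .adTy T
  | .oadt T e => .oadt T (substE k u e)
  | .unit => .unit
  | .lit b => .lit b
  | .lam τ e => .lam (substE k u τ) (substE (k+1) u e)
  | .letE e₁ e₂ => .letE (substE k u e₁) (substE (k+1) u e₂)
  | .app e₁ e₂ => .app (substE k u e₁) (substE k u e₂)
  | .ctor C e => .ctor C (substE k u e)
  | .ite e₀ e₁ e₂ => .ite (substE k u e₀) (substE k u e₁) (substE k u e₂)
  | .mux e₀ e₁ e₂ => .mux (substE k u e₀) (substE k u e₁) (substE k u e₂)
  | .pair e₁ e₂ => .pair (substE k u e₁) (substE k u e₂)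
  | .psiPair e₁ e₂ => .psiPair (substE k u e₁) (substE k u e₂)
  | .proj b e => .proj b (substE k u e)
  | .oinj b τ e => .oinj b (substE k u τ) (substE k u e)
  | .omatch e₀ e₁ e₂ => .omatch (substE k u e₀) (substE (k+1) u e₁) (substE (k+1) u e₂)
  | .matchE e₀ alts => .matchE (substE k u e₀) (substA k u alts)
  | .boolSec e => .boolSec (substE k u e)
  | .boxedLit b => .boxedLit b
  | .boxedInj b w v => .boxedInj b (substE k u w) (substE k u v)

def substA (k : ℕ) (u : Expr) : Alts → Alts
  | .nil => .nil
  | .cons C body rest => .cons C (substE (k+1) u body) (substA k u rest)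
end

end Expr

/-- The alternatives as a list of pairs of a constructor name and a branch body. -/
def Alts.toList : Alts → List (GName × Expr)
  | .nil => []
  | .cons C body rest => (C, body) :: rest.toList

/-- Look up the branch of a pattern matching corresponding to a constructor. -/
def Alts.find : Alts → GName → Option Expr
  | .nil, _ => none
  | .cons C body rest, C' => if C = C' then some body else rest.find C'

/-- Oblivious type values `@w`. -/
inductive OTyVal : Expr → Prop
  | unit : OTyVal .unitTy
  | obool : OTyVal .oboolTy
  | prod : OTyVal w₁ → OTyVal w₂ → OTyVal (.prodTy w₁ w₂)
  | osum : OTyVal w₁ → OTyVal w₂ → OTyVal (.osumTy w₁ w₂)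

/-- Oblivious values `@v`. -/
inductive OVal : Expr → Prop
  | unit : OVal .unit
  | blit (b : Bool) : OVal (.boxedLit b)
  | pair : OVal v₁ → OVal v₂ → OVal (.pair v₁ v₂)
  | binj (b : Bool) : OTyVal w → OVal v → OVal (.boxedInj b w v)

/-- Values. -/
inductive IsVal : Expr → Prop
  | ofOVal : OVal v → IsVal v
  | lit (b : Bool) : IsVal (.lit b)
  | pair : IsVal v₁ → IsVal v₂ → IsVal (.pair v₁ v₂)
  | psiPair : IsVal v₁ → IsVal v₂ → IsVal (.psiPair v₁ v₂)
  | lam (τ e : Expr) : IsVal (.lam τ e)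
  | ctor (C : GName) : IsVal v → IsVal (.ctor C v)

/-- Oblivious value synthesis `@v <~ @w`: `@v` is an arbitrary oblivious value of
    oblivious type value `@w`. -/
inductive OValTy : Expr → Expr → Prop
  | unit : OValTy .unit .unitTy
  | obool (b : Bool) : OValTy (.boxedLit b) .oboolTy
  | prod : OValTy v₁ w₁ → OValTy v₂ w₂ → OValTy (.pair v₁ v₂) (.prodTy w₁ w₂)
  | osum (b : Bool) : OTyVal w₁ → OTyVal w₂ → OValTy v (cond b w₁ w₂) →
      OValTy (.boxedInj b (.osumTy w₁ w₂) v) (.osumTy w₁ w₂)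

/-- Global definitions: ADTs, (possibly leaky/unsafe) functions, and OADTs. -/
inductive GDef : Type
  | data (ctors : List (GName × Expr))   -- `data T = C̄ τ̄`
  | fn (leaky : Bool) (τ e : Expr)       -- `fn x : τ = e` (`leaky = true` for `unsafe fn`)
  | oadt (τ body : Expr)                 -- `obliv @T (x : τ) = body` (`body` binds one variable)

/-- A global definition context. -/
abbrev GCtx := GName → Option GDef

/-- `C` is a constructor of the ADT `T` with argument type `τ`. -/
def CtorOf (Sg : GCtx) (T C : GName) (τ : Expr) : Prop :=
  ∃ cs, Sg T = some (.data cs) ∧ (C, τ) ∈ cs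

/-- Small-step operational semantics of `λ_OADTΨ` (head reductions together with
    the closure under evaluation contexts). -/
inductive Step (Sg : GCtx) : Expr → Expr → Prop
  -- head reductions
  | gfun : Sg x = some (.fn lk τ e) → Step Sg (.gvar x) e
  | oadtBeta : Sg T = some (.oadt τ body) → IsVal v →
      Step Sg (.oadt T v) (Expr.substE 0 v body)
  | appBeta : IsVal v → Step Sg (.app (.lam τ e) v) (Expr.substE 0 v e)
  | letBeta : IsVal v → Step Sg (.letE v e) (Expr.substE 0 v e)
  | iteRed (b : Bool) : Step Sg (.ite (.lit b) e₁ e₂) (cond b e₁ e₂)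
  | muxRed (b : Bool) : IsVal v₁ → IsVal v₂ →
      Step Sg (.mux (.boxedLit b) v₁ v₂) (cond b v₁ v₂)
  | matchRed : IsVal v → alts.find C = some body →
      Step Sg (.matchE (.ctor C v) alts) (Expr.substE 0 v body)
  | projPair (b : Bool) : IsVal v₁ → IsVal v₂ →
      Step Sg (.proj b (.pair v₁ v₂)) (cond b v₁ v₂)
  | projPsiPair (b : Bool) : IsVal v₁ → IsVal v₂ →
      Step Sg (.proj b (.psiPair v₁ v₂)) (cond b v₁ v₂)
  | secRed (b : Bool) : Step Sg (.boolSec (.lit b)) (.boxedLit b)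
  | oinjRed (b : Bool) : OTyVal w → OVal v → Step Sg (.oinj b w v) (.boxedInj b w v)
  | omatchRed (b : Bool) : OValTy v (cond b w₁ w₂) → OValTy v₁ w₁ → OValTy v₂ w₂ →
      Step Sg (.omatch (.boxedInj b (.osumTy w₁ w₂) v) e₁ e₂)
        (.mux (.boxedLit b)
          (cond b (Expr.substE 0 v e₁) (Expr.substE 0 v₁ e₁))
          (cond b (Expr.substE 0 v₂ e₂) (Expr.substE 0 v e₂)))
  -- evaluation contexts
  | prodTy₁ : Step Sg τ₁ τ₁' → Step Sg (.prodTy τ₁ τ₂) (.prodTy τ₁' τ₂)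
  | prodTy₂ : OTyVal w → Step Sg τ₂ τ₂' → Step Sg (.prodTy w τ₂) (.prodTy w τ₂')
  | osumTy₁ : Step Sg τ₁ τ₁' → Step Sg (.osumTy τ₁ τ₂) (.osumTy τ₁' τ₂)
  | osumTy₂ : OTyVal w → Step Sg τ₂ τ₂' → Step Sg (.osumTy w τ₂) (.osumTy w τ₂')
  | letCtx : Step Sg e₁ e₁' → Step Sg (.letE e₁ e₂) (.letE e₁' e₂)
  | appArg : Step Sg e₂ e₂' → Step Sg (.app e₁ e₂) (.app e₁ e₂')
  | appFun : IsVal v → Step Sg e₁ e₁' → Step Sg (.app e₁ v) (.app e₁' v)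
  | ctorCtx : Step Sg e e' → Step Sg (.ctor C e) (.ctor C e')
  | oadtCtx : Step Sg e e' → Step Sg (.oadt T e) (.oadt T e')
  | iteCtx : Step Sg e₀ e₀' → Step Sg (.ite e₀ e₁ e₂) (.ite e₀' e₁ e₂)
  | muxCtx₀ : Step Sg e₀ e₀' → Step Sg (.mux e₀ e₁ e₂) (.mux e₀' e₁ e₂)
  | muxCtx₁ : IsVal v₀ → Step Sg e₁ e₁' → Step Sg (.mux v₀ e₁ e₂) (.mux v₀ e₁' e₂)
  | muxCtx₂ : IsVal v₀ → IsVal v₁ → Step Sg e₂ e₂' → Step Sg (.mux v₀ v₁ e₂) (.mux v₀ v₁ e₂')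
  | pairCtx₁ : Step Sg e₁ e₁' → Step Sg (.pair e₁ e₂) (.pair e₁' e₂)
  | pairCtx₂ : IsVal v₁ → Step Sg e₂ e₂' → Step Sg (.pair v₁ e₂) (.pair v₁ e₂')
  | psiPairCtx₁ : Step Sg e₁ e₁' → Step Sg (.psiPair e₁ e₂) (.psiPair e₁' e₂)
  | psiPairCtx₂ : IsVal v₁ → Step Sg e₂ e₂' → Step Sg (.psiPair v₁ e₂) (.psiPair v₁ e₂')
  | projCtx : Step Sg e e' → Step Sg (.proj b e) (.proj b e')
  | oinjTy : Step Sg τ τ' → Step Sg (.oinj b τ e) (.oinj b τ' e)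
  | oinjCtx : OTyVal w → Step Sg e e' → Step Sg (.oinj b w e) (.oinj b w e')
  | omatchCtx : Step Sg e₀ e₀' → Step Sg (.omatch e₀ e₁ e₂) (.omatch e₀' e₁ e₂)
  | matchCtx : Step Sg e₀ e₀' → Step Sg (.matchE e₀ alts) (.matchE e₀' alts)
  | secCtx : Step Sg e e' → Step Sg (.boolSec e) (.boolSec e')

/-- `e` reduces to `e'` in exactly `n` small steps. -/
inductive StepN (Sg : GCtx) : ℕ → Expr → Expr → Prop
  | zero : StepN Sg 0 e e
  | succ : Step Sg e e' → StepN Sg n e' e'' → StepN Sg (n+1) e e''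

/-- `e` reduces to `e'` in some number of small steps. -/
def StepStar (Sg : GCtx) (e e' : Expr) : Prop := ∃ n, StepN Sg n e e'

/-- Type equivalence: the equivalence closure of reduction
    (the paper defines it via parallel reduction). -/
def TyEquiv (Sg : GCtx) : Expr → Expr → Prop := Relation.EqvGen (Step Sg)

mutual
/-- The typing judgment `Σ; Γ ⊢ e : τ` of `λ_OADTΨ`.  The flag `lk` activates the
    "leaky" mode used to type-check unsafe functions (it omits the security-related
    oblivious-kinding side conditions of `mux` and `@match`); the secure type system
    is `Typing false`. The local context `Γ` is a de Bruijn context. -/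
inductive Typing : Bool → GCtx → List Expr → Expr → Expr → Prop
  | conv : Typing lk Sg Γ e τ → TyEquiv Sg τ τ' → Kinding lk Sg Γ τ' κ →
      Typing lk Sg Γ e τ'
  | unit : Typing lk Sg Γ .unit .unitTy
  | lit (b : Bool) : Typing lk Sg Γ (.lit b) .boolTy
  | var : Γ[i]? = some τ → Typing lk Sg Γ (.bvar i) (Expr.shiftE (i+1) 0 τ)
  | gfun : Sg x = some (.fn lk' τ e) → (lk = false → lk' = false) →
      Typing lk Sg Γ (.gvar x) τ
  | abs : Typing lk Sg (τ₁ :: Γ) e τ₂ → Kinding lk Sg Γ τ₁ κ →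
      Typing lk Sg Γ (.lam τ₁ e) (.piTy τ₁ τ₂)
  | app : Typing lk Sg Γ e₂ (.piTy τ₁ τ₂) → Typing lk Sg Γ e₁ τ₁ →
      Typing lk Sg Γ (.app e₂ e₁) (Expr.substE 0 e₁ τ₂)
  | letE : Typing lk Sg Γ e₁ τ₁ → Typing lk Sg (τ₁ :: Γ) e₂ τ₂ →
      Typing lk Sg Γ (.letE e₁ e₂) (Expr.substE 0 e₁ τ₂)
  | pair : Typing lk Sg Γ e₁ τ₁ → Typing lk Sg Γ e₂ τ₂ →
      Typing lk Sg Γ (.pair e₁ e₂) (.prodTy τ₁ τ₂)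
  | proj (b : Bool) : Typing lk Sg Γ e (.prodTy τ₁ τ₂) →
      Typing lk Sg Γ (.proj b e) (cond b τ₁ τ₂)
  | ite : Typing lk Sg Γ e₀ .boolTy →
      Typing lk Sg Γ e₁ (Expr.substE 0 (.lit true) τ) →
      Typing lk Sg Γ e₂ (Expr.substE 0 (.lit false) τ) →
      Typing lk Sg Γ (.ite e₀ e₁ e₂) (Expr.substE 0 e₀ τ)
  | ctor : CtorOf Sg T C τ → Typing lk Sg Γ e τ →
      Typing lk Sg Γ (.ctor C e) (.adTy T)
  | matchE : Sg T = some (.data cs) → Typing lk Sg Γ e₀ (.adTy T) →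
      alts.toList.length = cs.length →
      (∀ (i : ℕ) (C : GName) (τᵢ body : Expr), cs[i]? = some (C, τᵢ) →
        alts.toList[i]? = some (C, body) →
        Typing lk Sg (τᵢ :: Γ) body
          (Expr.substE 0 (.ctor C (.bvar 0)) (Expr.shiftE 1 1 τ'))) →
      (∀ (i : ℕ) (C : GName) (body : Expr), alts.toList[i]? = some (C, body) →
        ∃ τᵢ : Expr, cs[i]? = some (C, τᵢ)) →
      Typing lk Sg Γ (.matchE e₀ alts) (Expr.substE 0 e₀ τ')
  | psiPair : Sg T = some (.oadt τ body) →
      Typing lk Sg Γ e₁ τ → Typing lk Sg Γ e₂ (.oadt T e₁) →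
      Typing lk Sg Γ (.psiPair e₁ e₂) (.psiTy T)
  | psiProj₁ : Sg T = some (.oadt τ body) → Typing lk Sg Γ e (.psiTy T) →
      Typing lk Sg Γ (.proj true e) τ
  | psiProj₂ : Sg T = some (.oadt τ body) → Typing lk Sg Γ e (.psiTy T) →
      Typing lk Sg Γ (.proj false e) (.oadt T (.proj true e))
  | mux : Typing lk Sg Γ e₀ .oboolTy →
      (lk = false → Kinding lk Sg Γ τ .obliv) →
      Typing lk Sg Γ e₁ τ → Typing lk Sg Γ e₂ τ →
      Typing lk Sg Γ (.mux e₀ e₁ e₂) τ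
  | oinj (b : Bool) : Typing lk Sg Γ e (cond b τ₁ τ₂) →
      Kinding lk Sg Γ (.osumTy τ₁ τ₂) .obliv →
      Typing lk Sg Γ (.oinj b (.osumTy τ₁ τ₂) e) (.osumTy τ₁ τ₂)
  | omatch : Typing lk Sg Γ e₀ (.osumTy τ₁ τ₂) →
      (lk = false → Kinding lk Sg Γ τ .obliv) →
      Typing lk Sg (τ₁ :: Γ) e₁ (Expr.shiftE 1 0 τ) →
      Typing lk Sg (τ₂ :: Γ) e₂ (Expr.shiftE 1 0 τ) →
      Typing lk Sg Γ (.omatch e₀ e₁ e₂) τ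
  | boolSec : Typing lk Sg Γ e .boolTy → Typing lk Sg Γ (.boolSec e) .oboolTy
  | boxedLit (b : Bool) : Typing lk Sg Γ (.boxedLit b) .oboolTy
  | boxedInj : OValTy (.boxedInj b w v) w → Typing lk Sg Γ (.boxedInj b w v) w

/-- The kinding judgment `Σ; Γ ⊢ τ :: κ` of `λ_OADTΨ`. -/
inductive Kinding : Bool → GCtx → List Expr → Expr → Kind → Prop
  | sub : Kinding lk Sg Γ τ κ → Kind.le κ κ' → Kinding lk Sg Γ τ κ'
  | unit : Kinding lk Sg Γ .unitTy .any
  | bool : Kinding lk Sg Γ .boolTy .pub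
  | obool : Kinding lk Sg Γ .oboolTy .obliv
  | adt : Sg T = some (.data cs) → Kinding lk Sg Γ (.adTy T) .pub
  | oadt : Sg T = some (.oadt τ body) → Typing lk Sg Γ e τ →
      Kinding lk Sg Γ (.oadt T e) .obliv
  | pi : Kinding lk Sg Γ τ₁ κ₁ → Kinding lk Sg (τ₁ :: Γ) τ₂ κ₂ →
      Kinding lk Sg Γ (.piTy τ₁ τ₂) .mixed
  | prod : Kinding lk Sg Γ τ₁ κ → Kinding lk Sg Γ τ₂ κ →
      Kinding lk Sg Γ (.prodTy τ₁ τ₂) κ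
  | osum : Kinding lk Sg Γ τ₁ .obliv → Kinding lk Sg Γ τ₂ .obliv →
      Kinding lk Sg Γ (.osumTy τ₁ τ₂) .obliv
  | psi : Sg T = some (.oadt τ body) → Kinding lk Sg Γ (.psiTy T) .mixed
  | letE : Typing lk Sg Γ e τ → Kinding lk Sg (τ :: Γ) τ' .obliv →
      Kinding lk Sg Γ (.letE e τ') .obliv
  | ite : Typing lk Sg Γ e₀ .boolTy → Kinding lk Sg Γ τ₁ .obliv →
      Kinding lk Sg Γ τ₂ .obliv → Kinding lk Sg Γ (.ite e₀ τ₁ τ₂) .obliv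
  | matchE : Sg T = some (.data cs) → Typing lk Sg Γ e₀ (.adTy T) →
      alts.toList.length = cs.length →
      (∀ (i : ℕ) (C : GName) (τᵢ body : Expr), cs[i]? = some (C, τᵢ) →
        alts.toList[i]? = some (C, body) →
        Kinding lk Sg (τᵢ :: Γ) body .obliv) →
      (∀ (i : ℕ) (C : GName) (body : Expr), alts.toList[i]? = some (C, body) →
        ∃ τᵢ : Expr, cs[i]? = some (C, τᵢ)) →
      Kinding lk Sg Γ (.matchE e₀ alts) .obliv

end

/-- Typing of global definitions. -/
inductive GDefWT (Sg : GCtx) : GDef → Prop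
  | fn : Kinding lk Sg [] τ κ → Typing lk Sg [] e τ → GDefWT Sg (.fn lk τ e)
  | data : ∀ (cs : List (GName × Expr)),
      (∀ (C : GName) (τ : Expr), (C, τ) ∈ cs → Kinding false Sg [] τ .pub) →
      GDefWT Sg (.data cs)
  | oadt : Kinding false Sg [] τ .pub → Kinding false Sg [τ] body .obliv →
      GDefWT Sg (.oadt τ body)

/-- Well-typedness of a global definition context. -/
def GCtxWT (Sg : GCtx) : Prop := ∀ x d, Sg x = some d → GDefWT Sg d

mutual
/-- Indistinguishability: two expressions are indistinguishable when they differ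
    only in their unobservable boxed oblivious values. -/
inductive Indist : Expr → Expr → Prop
  | boxedLit (b b' : Bool) : Indist (.boxedLit b) (.boxedLit b')
  | boxedInj : OValTy (.boxedInj b w v) w → OValTy (.boxedInj b' w v') w →
      Indist (.boxedInj b w v) (.boxedInj b' w v')
  | unitTy : Indist .unitTy .unitTy
  | boolTy : Indist .boolTy .boolTy
  | oboolTy : Indist .oboolTy .oboolTy
  | prodTy : Indist τ₁ τ₁' → Indist τ₂ τ₂' → Indist (.prodTy τ₁ τ₂) (.prodTy τ₁' τ₂')
  | osumTy : Indist τ₁ τ₁' → Indist τ₂ τ₂' → Indist (.osumTy τ₁ τ₂) (.osumTy τ₁' τ₂')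
  | piTy : Indist τ₁ τ₁' → Indist τ₂ τ₂' → Indist (.piTy τ₁ τ₂) (.piTy τ₁' τ₂')
  | psiTy (T : GName) : Indist (.psiTy T) (.psiTy T)
  | bvar (i : ℕ) : Indist (.bvar i) (.bvar i)
  | gvar (x : GName) : Indist (.gvar x) (.gvar x)
  | adTy (T : GName) : Indist (.adTy T) (.adTy T)
  | oadt : Indist e e' → Indist (.oadt T e) (.oadt T e')
  | unit : Indist .unit .unit
  | lit (b : Bool) : Indist (.lit b) (.lit b)
  | lam : Indist τ τ' → Indist e e' → Indist (.lam τ e) (.lam τ' e')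
  | letE : Indist e₁ e₁' → Indist e₂ e₂' → Indist (.letE e₁ e₂) (.letE e₁' e₂')
  | app : Indist e₁ e₁' → Indist e₂ e₂' → Indist (.app e₁ e₂) (.app e₁' e₂')
  | ctor : Indist e e' → Indist (.ctor C e) (.ctor C e')
  | ite : Indist e₀ e₀' → Indist e₁ e₁' → Indist e₂ e₂' →
      Indist (.ite e₀ e₁ e₂) (.ite e₀' e₁' e₂')
  | mux : Indist e₀ e₀' → Indist e₁ e₁' → Indist e₂ e₂' →
      Indist (.mux e₀ e₁ e₂) (.mux e₀' e₁' e₂')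
  | pair : Indist e₁ e₁' → Indist e₂ e₂' → Indist (.pair e₁ e₂) (.pair e₁' e₂')
  | psiPair : Indist e₁ e₁' → Indist e₂ e₂' → Indist (.psiPair e₁ e₂) (.psiPair e₁' e₂')
  | proj : Indist e e' → Indist (.proj b e) (.proj b e')
  | oinj : Indist τ τ' → Indist e e' → Indist (.oinj b τ e) (.oinj b τ' e')
  | omatch : Indist e₀ e₀' → Indist e₁ e₁' → Indist e₂ e₂' →
      Indist (.omatch e₀ e₁ e₂) (.omatch e₀' e₁' e₂')
  | matchE : Indist e₀ e₀' → IndistAlts alts alts' →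
      Indist (.matchE e₀ alts) (.matchE e₀' alts')
  | boolSec : Indist e e' → Indist (.boolSec e) (.boolSec e')

inductive IndistAlts : Alts → Alts → Prop
  | nil : IndistAlts .nil .nil
  | cons : Indist body body' → IndistAlts rest rest' →
      IndistAlts (.cons C body rest) (.cons C body' rest')
end

end Taypsi

namespace Taypsi

/-- Simple types `η`: the public, non-dependent fragment used for source programs. -/
inductive SimpleTy : Type
  | unit | bool
  | adt (T : GName)
  | prod (η₁ η₂ : SimpleTy)
  | arrow (η₁ η₂ : SimpleTy)
  deriving DecidableEq

/-- Specification types `θ`: simple types extended with oblivious booleans and Ψ-types. -/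
inductive SpecTy : Type
  | unit | bool | obool
  | adt (T : GName)
  | psi (T : GName)
  | prod (θ₁ θ₂ : SpecTy)
  | arrow (θ₁ θ₂ : SpecTy)
  deriving DecidableEq

/-- Every simple type is a specification type. -/
def SimpleTy.toSpec : SimpleTy → SpecTy
  | .unit => .unit
  | .bool => .bool
  | .adt T => .adt T
  | .prod η₁ η₂ => .prod η₁.toSpec η₂.toSpec
  | .arrow η₁ η₂ => .arrow η₁.toSpec η₂.toSpec

/-- Simple types as `λ_OADTΨ` types. -/
def SimpleTy.toExpr : SimpleTy → Expr
  | .unit => .unitTy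
  | .bool => .boolTy
  | .adt T => .adTy T
  | .prod η₁ η₂ => .prodTy η₁.toExpr η₂.toExpr
  | .arrow η₁ η₂ => .piTy η₁.toExpr η₂.toExpr

/-- Specification types as `λ_OADTΨ` types. -/
def SpecTy.toExpr : SpecTy → Expr
  | .unit => .unitTy
  | .bool => .boolTy
  | .obool => .oboolTy
  | .adt T => .adTy T
  | .psi T => .psiTy T
  | .prod θ₁ θ₂ => .prodTy θ₁.toExpr θ₂.toExpr
  | .arrow θ₁ θ₂ => .piTy θ₁.toExpr θ₂.toExpr

/-- The data of an OADT-structure for an OADT `@T`: its public type, section,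
retraction and view functions, and the valid-public-view relation `≼`. -/
structure OadtStructData : Type where
  pub : GName                       -- the public counterpart `T`
  secF : Expr                       -- section `s : Πk:τ, T → @T k`
  retF : Expr                       -- retraction `r : Πk:τ, @T k → T`
  viewF : Expr                      -- public view function `view : T → τ`
  validView : Expr → Expr → Prop    -- `v ≼ k`

/-- The data of a join-structure: the order `⊑` on public views and the
join and reshape functions. -/
structure JoinStructData : Type where
  vle : Expr → Expr → Prop          -- `k ⊑ k'`
  joinF : Expr                      -- `⊔ : τ → τ → τ`
  reshapeF : Expr                   -- `reshape : Πk:τ, Πk':τ, @T k → @T k'`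

/-- A Ψ-structure context `𝓢`: OADT-structures `𝓢_ω`, join-structures `𝓢_⊔`,
intro-structures `𝓢_I`, elim-structures `𝓢_E` and coercion-structures `𝓢_↑`. -/
structure StructCtx : Type where
  oadt : GName → OadtStructData
  join : GName → Option JoinStructData
  intro : GName → GName → Option (SpecTy × Expr)          -- `@C : θᵢ → Ψ@T`
  elim : GName → SpecTy → Option (List SpecTy × Expr)     -- `@Imatch_α : Ψ@T → (θ̄→α) → α`
  coer : GName → GName → Option Expr                      -- `coer : Ψ@T → Ψ@T'`

/-- Erasure `⌊·⌋` of specification types to simple types. -/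
def erase (S : StructCtx) : SpecTy → SimpleTy
  | .unit => .unit
  | .bool => .bool
  | .obool => .bool
  | .adt T => .adt T
  | .psi T => .adt (S.oadt T).pub
  | .prod θ₁ θ₂ => .prod (erase S θ₁) (erase S θ₂)
  | .arrow θ₁ θ₂ => .arrow (erase S θ₁) (erase S θ₂)

/-- Iterated application. -/
def mkApp (f : Expr) (args : List Expr) : Expr := args.foldl .app f

/-- The `mux`-based merging witness for primitive oblivious types. -/
def muxIte (τ : Expr) : Expr :=
  .lam .oboolTy (.lam τ (.lam τ (.mux (.bvar 2) (.bvar 1) (.bvar 0))))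

/-- The merging witness for Ψ-types: join the public views, reshape both
branches to the common view, and `mux`. -/
def psiIte (T : GName) (j : JoinStructData) : Expr :=
  .lam .oboolTy (.lam (.psiTy T) (.lam (.psiTy T)
    (.letE (.app (.app j.joinF (.proj true (.bvar 1))) (.proj true (.bvar 0)))
      (.psiPair (.bvar 0)
        (.mux (.bvar 3)
          (.app (.app (.app j.reshapeF (.proj true (.bvar 2))) (.bvar 0))
            (.proj false (.bvar 2)))
          (.app (.app (.app j.reshapeF (.proj true (.bvar 1))) (.bvar 0))
            (.proj false (.bvar 1))))))))

/-- The merging witness for products: merge componentwise. -/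
def prodIte (τ w₁ w₂ : Expr) : Expr :=
  .lam .oboolTy (.lam τ (.lam τ
    (.pair
      (mkApp w₁ [.bvar 2, .proj true (.bvar 1), .proj true (.bvar 0)])
      (mkApp w₂ [.bvar 2, .proj false (.bvar 1), .proj false (.bvar 0)]))))

/-- The merging witness for arrows: merge pointwise. -/
def arrowIte (τ τ₁ w₂ : Expr) : Expr :=
  .lam .oboolTy (.lam τ (.lam τ (.lam τ₁
    (mkApp w₂ [.bvar 3, .app (.bvar 2) (.bvar 0), .app (.bvar 1) (.bvar 0)]))))

/-- The mergeability relation `θ ▷ @ite` (Figure "Mergeability"). -/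
inductive Mergeable (S : StructCtx) : SpecTy → Expr → Prop
  | unit : Mergeable S .unit (muxIte .unitTy)
  | obool : Mergeable S .obool (muxIte .oboolTy)
  | psi : S.join T = some j → Mergeable S (.psi T) (psiIte T j)
  | prod : Mergeable S θ₁ w₁ → Mergeable S θ₂ w₂ →
      Mergeable S (.prod θ₁ θ₂) (prodIte (SpecTy.toExpr (.prod θ₁ θ₂)) w₁ w₂)
  | arrow : Mergeable S θ₂ w₂ →
      Mergeable S (.arrow θ₁ θ₂)
        (arrowIte (SpecTy.toExpr (.arrow θ₁ θ₂)) θ₁.toExpr w₂)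

/-- The coercion relation `θ ↝ θ' ▷ coer` (Figure "Coercion"). -/
inductive Coercible (S : StructCtx) : SpecTy → SpecTy → Expr → Prop
  | id (θ : SpecTy) : Coercible S θ θ (.lam θ.toExpr (.bvar 0))
  | boolSec : Coercible S .bool .obool (.lam .boolTy (.boolSec (.bvar 0)))
  | sect : (S.oadt T).pub = T' →
      Coercible S (.adt T') (.psi T)
        (.lam (.adTy T')
          (.psiPair (.app (S.oadt T).viewF (.bvar 0))
            (.app (.app (S.oadt T).secF (.app (S.oadt T).viewF (.bvar 0))) (.bvar 0))))
  | psi : S.coer T T' = some c → Coercible S (.psi T) (.psi T') c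
  | prod : Coercible S θ₁ θ₁' c₁ → Coercible S θ₂ θ₂' c₂ →
      Coercible S (.prod θ₁ θ₂) (.prod θ₁' θ₂')
        (.lam (SpecTy.toExpr (.prod θ₁ θ₂))
          (.pair (.app c₁ (.proj true (.bvar 0))) (.app c₂ (.proj false (.bvar 0)))))
  | arrow : Coercible S θ₁' θ₁ c₁ → Coercible S θ₂ θ₂' c₂ →
      Coercible S (.arrow θ₁ θ₂) (.arrow θ₁' θ₂')
        (.lam (SpecTy.toExpr (.arrow θ₁ θ₂)) (.lam θ₁'.toExpr
          (.app c₂ (.app (.bvar 1) (.app c₁ (.bvar 0))))))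

/-- Closedness/well-typedness requirements implicit in the logical relations:
both components are closed well-typed values at `⌊θ⌋` and `θ`, respectively. -/
def lrWT (S : StructCtx) (Sg : GCtx) (θ : SpecTy) (v v' : Expr) : Prop :=
  IsVal v ∧ IsVal v' ∧
    Typing false Sg [] v ((erase S θ).toExpr) ∧ Typing false Sg [] v' θ.toExpr

/-- The step-indexed expression interpretation, as a function of a given value
interpretation `V` and the source/target types (for the well-typedness side
conditions). -/
def interpEAux (Sg : GCtx) (τs τt : Expr) (V : ℕ → Expr → Expr → Prop)
    (n : ℕ) (e e' : Expr) : Prop :=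
  Typing false Sg [] e τs ∧ Typing false Sg [] e' τt ∧
  ∀ i, i < n → ∀ v', IsVal v' → StepN Sg i e' v' →
    ∃ v, IsVal v ∧ StepStar Sg e v ∧ V (n - i) v v'

/-- The step-indexed value interpretation `⟦θ⟧ₙ` of a specification type. -/
def interpV (S : StructCtx) (Sg : GCtx) : SpecTy → ℕ → Expr → Expr → Prop
  | .unit => fun n v v' => lrWT S Sg .unit v v' ∧ (0 < n → v = v')
  | .bool => fun n v v' => lrWT S Sg .bool v v' ∧ (0 < n → v = v')
  | .adt T => fun n v v' => lrWT S Sg (.adt T) v v' ∧ (0 < n → v = v')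
  | .obool => fun n v v' => lrWT S Sg .obool v v' ∧
      (0 < n → ∃ b : Bool, v = .lit b ∧ v' = .boxedLit b)
  | .psi T => fun n v v' => lrWT S Sg (.psi T) v v' ∧
      (0 < n → ∃ k ov : Expr, v' = .psiPair k ov ∧
        StepStar Sg (mkApp (S.oadt T).retF [k, ov]) v)
  | .prod θ₁ θ₂ => fun n v v' => lrWT S Sg (.prod θ₁ θ₂) v v' ∧
      ∃ v₁ v₂ v₁' v₂' : Expr, v = .pair v₁ v₂ ∧ v' = .pair v₁' v₂' ∧
        interpV S Sg θ₁ n v₁ v₁' ∧ interpV S Sg θ₂ n v₂ v₂'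
  | .arrow θ₁ θ₂ => fun n v v' => lrWT S Sg (.arrow θ₁ θ₂) v v' ∧
      ∃ τ e τ' e' : Expr, v = .lam τ e ∧ v' = .lam τ' e' ∧
        ∀ i, i < n → ∀ u u' : Expr, interpV S Sg θ₁ i u u' →
          interpEAux Sg ((erase S θ₂).toExpr) θ₂.toExpr (interpV S Sg θ₂) i
            (Expr.substE 0 u e) (Expr.substE 0 u' e')

/-- The step-indexed expression interpretation `𝓔⟦θ⟧ₙ`. -/
def interpE (S : StructCtx) (Sg : GCtx) (θ : SpecTy) : ℕ → Expr → Expr → Prop :=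
  interpEAux Sg ((erase S θ).toExpr) θ.toExpr (interpV S Sg θ)

/-- The step-indexed interpretation `⟦Γ⟧ₙ` of typing contexts of specification
types: substitutions assigning to each variable a pair of related values. -/
def interpG (S : StructCtx) (Sg : GCtx) (Γ : List SpecTy) (n : ℕ)
    (σ : List (Expr × Expr)) : Prop :=
  List.Forall₂ (fun θ p => interpV S Sg θ n p.1 p.2) Γ σ

/-- Multi-substitution of closed values for the free variables of an expression. -/
def msubst (vs : List Expr) (e : Expr) : Expr :=
  vs.foldl (fun e v => Expr.substE 0 v e) e

/-- The defining (typing and semantic) axioms of an OADT-structure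
(Definition "OADT-structure", axioms `A-O₁`–`A-O₃`). -/
def OadtStructOK (Sg : GCtx) (T : GName) (s : OadtStructData) : Prop :=
  ∃ τ body cs,
    Sg T = some (.oadt τ body) ∧
    Sg s.pub = some (.data cs) ∧
    Typing false Sg [] s.secF (.piTy τ (.piTy (.adTy s.pub) (.oadt T (.bvar 1)))) ∧
    Typing true Sg [] s.retF (.piTy τ (.piTy (.oadt T (.bvar 0)) (.adTy s.pub))) ∧
    Typing false Sg [] s.viewF (.piTy (.adTy s.pub) τ) ∧
    -- A-O₁ : the retraction is a left inverse of the section on valid views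
    (∀ v k ov : Expr, IsVal v → IsVal k → IsVal ov →
      Typing false Sg [] v (.adTy s.pub) → Typing false Sg [] k τ →
      Typing false Sg [] ov (.oadt T k) →
      s.validView v k → StepStar Sg (mkApp s.secF [k, v]) ov →
      StepStar Sg (mkApp s.retF [k, ov]) v) ∧
    -- A-O₂ : the result of the retraction has a valid public view
    (∀ v k ov : Expr, IsVal v → IsVal k → IsVal ov →
      Typing false Sg [] v (.adTy s.pub) → Typing false Sg [] k τ →
      Typing false Sg [] ov (.oadt T k) →
      StepStar Sg (mkApp s.retF [k, ov]) v → s.validView v k) ∧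
    -- A-O₃ : the view function produces a valid public view
    (∀ v k : Expr, IsVal v → IsVal k →
      Typing false Sg [] v (.adTy s.pub) → Typing false Sg [] k τ →
      StepStar Sg (.app s.viewF v) k → s.validView v k)

/-- The defining axioms of a join-structure (axioms `A-R₁`–`A-R₄`). -/
def JoinStructOK (Sg : GCtx) (T : GName) (s : OadtStructData)
    (j : JoinStructData) : Prop :=
  ∃ τ body,
    Sg T = some (.oadt τ body) ∧
    Typing false Sg [] j.joinF (.piTy τ (.piTy τ τ)) ∧
    Typing false Sg [] j.reshapeF
      (.piTy τ (.piTy τ (.piTy (.oadt T (.bvar 1)) (.oadt T (.bvar 1))))) ∧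
    -- A-R₁ : `⊑` is a partial order on the public view type
    (∀ k : Expr, IsVal k → Typing false Sg [] k τ → j.vle k k) ∧
    (∀ k₁ k₂ k₃ : Expr, j.vle k₁ k₂ → j.vle k₂ k₃ → j.vle k₁ k₃) ∧
    (∀ k₁ k₂ : Expr, j.vle k₁ k₂ → j.vle k₂ k₁ → k₁ = k₂) ∧
    -- A-R₂ : the join function produces an upper bound
    (∀ k₁ k₂ k : Expr, IsVal k₁ → IsVal k₂ → IsVal k →
      Typing false Sg [] k₁ τ → Typing false Sg [] k₂ τ → Typing false Sg [] k τ →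
      StepStar Sg (mkApp j.joinF [k₁, k₂]) k → j.vle k₁ k ∧ j.vle k₂ k) ∧
    -- A-R₃ : validity of public views is monotone w.r.t. `⊑`
    (∀ v k k' : Expr, s.validView v k → j.vle k k' → s.validView v k') ∧
    -- A-R₄ : reshaping to a valid public view preserves the retracted value
    (∀ v k k' ov ov' : Expr, IsVal v → IsVal k → IsVal k' → IsVal ov → IsVal ov' →
      Typing false Sg [] v (.adTy s.pub) →
      Typing false Sg [] k τ → Typing false Sg [] k' τ →
      Typing false Sg [] ov (.oadt T k) → Typing false Sg [] ov' (.oadt T k') →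
      StepStar Sg (mkApp s.retF [k, ov]) v → s.validView v k' →
      StepStar Sg (mkApp j.reshapeF [k, k', ov]) ov' →
      StepStar Sg (mkApp s.retF [k', ov']) v)

/-- The defining axioms of an intro-structure (axiom `A-I₁`): the oblivious
constructor logically refines the public one. -/
def IntroStructOK (S : StructCtx) (Sg : GCtx) (T C : GName) (θᵢ : SpecTy)
    (c : Expr) : Prop :=
  CtorOf Sg (S.oadt T).pub C ((erase S θᵢ).toExpr) ∧
  Typing false Sg [] c (.piTy θᵢ.toExpr (.psiTy T)) ∧
  ∀ (n : ℕ) (v v' : Expr), interpV S Sg θᵢ n v v' →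
    interpE S Sg (.psi T) n (.ctor C v) (.app c v')

/-- The type `Ψ@T → (θ₁ → α) → ⋯ → (θ_k → α) → α` of an elimination method. -/
def elimTy (T : GName) (θs : List SpecTy) (α : SpecTy) : Expr :=
  .piTy (.psiTy T)
    (θs.foldr (fun θ acc => .piTy (SpecTy.toExpr (.arrow θ α)) acc) α.toExpr)

/-- The defining axioms of an elim-structure (axiom `A-E₁`): the oblivious
pattern matching logically refines public pattern matching. -/
def ElimStructOK (S : StructCtx) (Sg : GCtx) (T : GName) (α : SpecTy)
    (θs : List SpecTy) (m : Expr) : Prop :=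
  Typing false Sg [] m (elimTy T θs α) ∧
  ∃ cs, Sg (S.oadt T).pub = some (.data cs) ∧ θs.length = cs.length ∧
    (∀ (i : ℕ) (C : GName) (τ : Expr) (θᵢ : SpecTy),
      cs[i]? = some (C, τ) → θs[i]? = some θᵢ → τ = (erase S θᵢ).toExpr) ∧
    -- A-E₁
    (∀ (n : ℕ) (k ov vᵢ : Expr) (i : ℕ) (C : GName) (τᵢ : Expr) (θᵢ : SpecTy)
        (eᵢ eᵢ' : Expr) (es es' : List Expr),
      cs[i]? = some (C, τᵢ) → θs[i]? = some θᵢ →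
      es.length = θs.length → es'.length = θs.length →
      IsVal k → IsVal ov → IsVal vᵢ →
      Typing false Sg [] (.psiPair k ov) (.psiTy T) →
      Typing false Sg [] vᵢ τᵢ →
      StepStar Sg (mkApp (S.oadt T).retF [k, ov]) (.ctor C vᵢ) →
      (∀ (j : ℕ) (θj : SpecTy) (ej ej' : Expr),
        θs[j]? = some θj → es[j]? = some ej → es'[j]? = some ej' →
        interpV S Sg (.arrow θj α) n
          (.lam ((erase S θj).toExpr) ej) (.lam θj.toExpr ej')) →
      es[i]? = some eᵢ → es'[i]? = some eᵢ' →
      interpE S Sg α n (Expr.substE 0 vᵢ eᵢ)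
        (mkApp m (.psiPair k ov ::
          List.zipWith (fun (θ : SpecTy) (e' : Expr) => Expr.lam θ.toExpr e') θs es')))

/-- The defining axioms of a coercion-structure (axiom `A-C₁`): the coercion
preserves the retracted value. -/
def CoerStructOK (S : StructCtx) (Sg : GCtx) (T T' : GName) (c : Expr) : Prop :=
  (S.oadt T).pub = (S.oadt T').pub ∧
  Typing false Sg [] c (.piTy (.psiTy T) (.psiTy T')) ∧
  ∀ v k ov k' ov' : Expr, IsVal v → IsVal k → IsVal ov → IsVal k' → IsVal ov' →
    Typing false Sg [] (.psiPair k ov) (.psiTy T) →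
    Typing false Sg [] (.psiPair k' ov') (.psiTy T') →
    Typing false Sg [] v (.adTy (S.oadt T).pub) →
    StepStar Sg (mkApp (S.oadt T).retF [k, ov]) v →
    StepStar Sg (.app c (.psiPair k ov)) (.psiPair k' ov') →
    StepStar Sg (mkApp (S.oadt T').retF [k', ov']) v

/-- The Ψ-structure context satisfies the defining axioms of all of its structures. -/
def StructCtxOK (S : StructCtx) (Sg : GCtx) : Prop :=
  (∀ T τ body, Sg T = some (.oadt τ body) → OadtStructOK Sg T (S.oadt T)) ∧
  (∀ T j, S.join T = some j → JoinStructOK Sg T (S.oadt T) j) ∧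
  (∀ T C θᵢ c, S.intro T C = some (θᵢ, c) → IntroStructOK S Sg T C θᵢ c) ∧
  (∀ T α θs m, S.elim T α = some (θs, m) → ElimStructOK S Sg T α θs m) ∧
  (∀ T T' c, S.coer T T' = some c → CoerStructOK S Sg T T' c)

/-- A lifting context `𝓛`: entries `x : θ ▷ x̂` associating a global function
with a target specification type and a lifted function. -/
abbrev LiftCtx := List (GName × SpecTy × GName)

/-- A lifting context is well-typed. -/
def LiftCtxWT (S : StructCtx) (Sg : GCtx) (L : LiftCtx) : Prop :=
  ∀ x θ x', (x, θ, x') ∈ L →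
    Typing false Sg [] (.gvar x) ((erase S θ).toExpr) ∧
    Typing false Sg [] (.gvar x') θ.toExpr

/-- A lifting context is `n`-valid. -/
def LiftCtxValidN (S : StructCtx) (Sg : GCtx) (L : LiftCtx) (n : ℕ) : Prop :=
  ∀ x θ x', (x, θ, x') ∈ L → interpE S Sg θ n (.gvar x) (.gvar x')

/-- A lifting context is valid. -/
def LiftCtxValid (S : StructCtx) (Sg : GCtx) (L : LiftCtx) : Prop :=
  ∀ n, LiftCtxValidN S Sg L n

/-- The declarative lifting judgment `𝓢; 𝓛; Σ; Γ ⊢ e : θ ▷ ê`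
(Figure "Declarative lifting rules"). -/
inductive Lift (S : StructCtx) (L : LiftCtx) (Sg : GCtx) :
    List SpecTy → Expr → SpecTy → Expr → Prop
  | unit : Lift S L Sg Γ .unit .unit .unit
  | lit (b : Bool) : Lift S L Sg Γ (.lit b) .bool (.lit b)
  | var : Γ[i]? = some θ → Lift S L Sg Γ (.bvar i) θ (.bvar i)
  | gfun : (x, θ, x') ∈ L → Lift S L Sg Γ (.gvar x) θ (.gvar x')
  | abs : Lift S L Sg (θ₁ :: Γ) e θ₂ e' →
      Lift S L Sg Γ (.lam ((erase S θ₁).toExpr) e) (.arrow θ₁ θ₂) (.lam θ₁.toExpr e')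
  | app : Lift S L Sg Γ e₂ (.arrow θ₁ θ₂) e₂' → Lift S L Sg Γ e₁ θ₁ e₁' →
      Lift S L Sg Γ (.app e₂ e₁) θ₂ (.app e₂' e₁')
  | letE : Lift S L Sg Γ e₁ θ₁ e₁' → Lift S L Sg (θ₁ :: Γ) e₂ θ₂ e₂' →
      Lift S L Sg Γ (.letE e₁ e₂) θ₂ (.letE e₁' e₂')
  | pair : Lift S L Sg Γ e₁ θ₁ e₁' → Lift S L Sg Γ e₂ θ₂ e₂' →
      Lift S L Sg Γ (.pair e₁ e₂) (.prod θ₁ θ₂) (.pair e₁' e₂')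
  | proj (b : Bool) : Lift S L Sg Γ e (.prod θ₁ θ₂) e' →
      Lift S L Sg Γ (.proj b e) (cond b θ₁ θ₂) (.proj b e')
  | ifPub : Lift S L Sg Γ e₀ .bool e₀' → Lift S L Sg Γ e₁ θ e₁' →
      Lift S L Sg Γ e₂ θ e₂' →
      Lift S L Sg Γ (.ite e₀ e₁ e₂) θ (.ite e₀' e₁' e₂')
  | ifObliv : Lift S L Sg Γ e₀ .obool e₀' → Mergeable S θ w →
      Lift S L Sg Γ e₁ θ e₁' → Lift S L Sg Γ e₂ θ e₂' →
      Lift S L Sg Γ (.ite e₀ e₁ e₂) θ (mkApp w [e₀', e₁', e₂'])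
  | ctorPub : CtorOf Sg T C (SimpleTy.toExpr η) → Lift S L Sg Γ e η.toSpec e' →
      Lift S L Sg Γ (.ctor C e) (.adt T) (.ctor C e')
  | ctorPsi : S.intro T C = some (θᵢ, c) → Lift S L Sg Γ e θᵢ e' →
      Lift S L Sg Γ (.ctor C e) (.psi T) (.app c e')
  | matchPub : Sg T = some (.data cs) → Lift S L Sg Γ e₀ (.adt T) e₀' →
      alts.toList.length = cs.length → alts'.toList.length = cs.length →
      (∀ (i : ℕ) (C : GName) (τ : Expr), cs[i]? = some (C, τ) →
        ∃ (η : SimpleTy) (body body' : Expr), τ = SimpleTy.toExpr η ∧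
          alts.toList[i]? = some (C, body) ∧ alts'.toList[i]? = some (C, body')) →
      (∀ (i : ℕ) (C : GName) (η : SimpleTy) (body body' : Expr),
        cs[i]? = some (C, SimpleTy.toExpr η) →
        alts.toList[i]? = some (C, body) → alts'.toList[i]? = some (C, body') →
        Lift S L Sg (η.toSpec :: Γ) body θ' body') →
      Lift S L Sg Γ (.matchE e₀ alts) θ' (.matchE e₀' alts')
  | matchPsi : S.elim T θ' = some (θs, m) →
      Sg (S.oadt T).pub = some (.data cs) →
      Lift S L Sg Γ e₀ (.psi T) e₀' →
      alts.toList.length = cs.length → θs.length = cs.length →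
      bodies'.length = cs.length →
      (∀ (i : ℕ) (C : GName) (τ : Expr), cs[i]? = some (C, τ) →
        ∃ (body : Expr), alts.toList[i]? = some (C, body)) →
      (∀ (i : ℕ) (C : GName) (θᵢ : SpecTy) (body body' : Expr),
        alts.toList[i]? = some (C, body) → θs[i]? = some θᵢ →
        bodies'[i]? = some body' →
        Lift S L Sg (θᵢ :: Γ) body θ' body') →
      Lift S L Sg Γ (.matchE e₀ alts) θ'
        (mkApp m (e₀' ::
          List.zipWith (fun (θᵢ : SpecTy) (b : Expr) => Expr.lam θᵢ.toExpr b) θs bodies'))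
  | coerce : Lift S L Sg Γ e θ e' → Coercible S θ θ' c →
      Lift S L Sg Γ e θ' (.app c e')

/-- A lifting context is derivable: every entry is backed by global definitions
related by the declarative lifting judgment (possibly recursively using `𝓛` itself). -/
def LiftCtxDeriv (S : StructCtx) (Sg : GCtx) (L : LiftCtx) : Prop :=
  ∀ x θ x', (x, θ, x') ∈ L →
    ∃ e e', Sg x = some (.fn false ((erase S θ).toExpr) e) ∧
      Sg x' = some (.fn false θ.toExpr e') ∧
      Lift S L Sg [] e θ e'

end Taypsi

namespace Taypsi

/-! ### An extension of the small-step semantics with unconditional `mux` selection.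

The extended relation `StepM` is strongly confluent, which lets us analyze the
equivalence closure `TyEquiv` of the (slightly) nondeterministic relation `Step`. -/

inductive StepM (Sg : GCtx) : Expr → Expr → Prop
  | gfun : Sg x = some (.fn lk τ e) → StepM Sg (.gvar x) e
  | oadtBeta : Sg T = some (.oadt τ body) → IsVal v →
      StepM Sg (.oadt T v) (Expr.substE 0 v body)
  | appBeta : IsVal v → StepM Sg (.app (.lam τ e) v) (Expr.substE 0 v e)
  | letBeta : IsVal v → StepM Sg (.letE v e) (Expr.substE 0 v e)
  | iteRed (b : Bool) : StepM Sg (.ite (.lit b) e₁ e₂) (cond b e₁ e₂)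
  | muxRed (b : Bool) : IsVal v₁ → IsVal v₂ →
      StepM Sg (.mux (.boxedLit b) v₁ v₂) (cond b v₁ v₂)
  | matchRed : IsVal v → alts.find C = some body →
      StepM Sg (.matchE (.ctor C v) alts) (Expr.substE 0 v body)
  | projPair (b : Bool) : IsVal v₁ → IsVal v₂ →
      StepM Sg (.proj b (.pair v₁ v₂)) (cond b v₁ v₂)
  | projPsiPair (b : Bool) : IsVal v₁ → IsVal v₂ →
      StepM Sg (.proj b (.psiPair v₁ v₂)) (cond b v₁ v₂)
  | secRed (b : Bool) : StepM Sg (.boolSec (.lit b)) (.boxedLit b)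
  | oinjRed (b : Bool) : OTyVal w → OVal v → StepM Sg (.oinj b w v) (.boxedInj b w v)
  | omatchRed (b : Bool) : OValTy v (cond b w₁ w₂) → OValTy v₁ w₁ → OValTy v₂ w₂ →
      StepM Sg (.omatch (.boxedInj b (.osumTy w₁ w₂) v) e₁ e₂)
        (.mux (.boxedLit b)
          (cond b (Expr.substE 0 v e₁) (Expr.substE 0 v₁ e₁))
          (cond b (Expr.substE 0 v₂ e₂) (Expr.substE 0 v e₂)))
  | prodTy₁ : StepM Sg τ₁ τ₁' → StepM Sg (.prodTy τ₁ τ₂) (.prodTy τ₁' τ₂)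
  | prodTy₂ : OTyVal w → StepM Sg τ₂ τ₂' → StepM Sg (.prodTy w τ₂) (.prodTy w τ₂')
  | osumTy₁ : StepM Sg τ₁ τ₁' → StepM Sg (.osumTy τ₁ τ₂) (.osumTy τ₁' τ₂)
  | osumTy₂ : OTyVal w → StepM Sg τ₂ τ₂' → StepM Sg (.osumTy w τ₂) (.osumTy w τ₂')
  | letCtx : StepM Sg e₁ e₁' → StepM Sg (.letE e₁ e₂) (.letE e₁' e₂)
  | appArg : StepM Sg e₂ e₂' → StepM Sg (.app e₁ e₂) (.app e₁ e₂')
  | appFun : IsVal v → StepM Sg e₁ e₁' → StepM Sg (.app e₁ v) (.app e₁' v)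
  | ctorCtx : StepM Sg e e' → StepM Sg (.ctor C e) (.ctor C e')
  | oadtCtx : StepM Sg e e' → StepM Sg (.oadt T e) (.oadt T e')
  | iteCtx : StepM Sg e₀ e₀' → StepM Sg (.ite e₀ e₁ e₂) (.ite e₀' e₁ e₂)
  | muxCtx₀ : StepM Sg e₀ e₀' → StepM Sg (.mux e₀ e₁ e₂) (.mux e₀' e₁ e₂)
  | muxCtx₁ : IsVal v₀ → StepM Sg e₁ e₁' → StepM Sg (.mux v₀ e₁ e₂) (.mux v₀ e₁' e₂)
  | muxCtx₂ : IsVal v₀ → IsVal v₁ → StepM Sg e₂ e₂' → StepM Sg (.mux v₀ v₁ e₂) (.mux v₀ v₁ e₂')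
  | pairCtx₁ : StepM Sg e₁ e₁' → StepM Sg (.pair e₁ e₂) (.pair e₁' e₂)
  | pairCtx₂ : IsVal v₁ → StepM Sg e₂ e₂' → StepM Sg (.pair v₁ e₂) (.pair v₁ e₂')
  | psiPairCtx₁ : StepM Sg e₁ e₁' → StepM Sg (.psiPair e₁ e₂) (.psiPair e₁' e₂)
  | psiPairCtx₂ : IsVal v₁ → StepM Sg e₂ e₂' → StepM Sg (.psiPair v₁ e₂) (.psiPair v₁ e₂')
  | projCtx : StepM Sg e e' → StepM Sg (.proj b e) (.proj b e')
  | oinjTy : StepM Sg τ τ' → StepM Sg (.oinj b τ e) (.oinj b τ' e)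
  | oinjCtx : OTyVal w → StepM Sg e e' → StepM Sg (.oinj b w e) (.oinj b w e')
  | omatchCtx : StepM Sg e₀ e₀' → StepM Sg (.omatch e₀ e₁ e₂) (.omatch e₀' e₁ e₂)
  | matchCtx : StepM Sg e₀ e₀' → StepM Sg (.matchE e₀ alts) (.matchE e₀' alts)
  | secCtx : StepM Sg e e' → StepM Sg (.boolSec e) (.boolSec e')
  | muxLate (b : Bool) : StepM Sg (.mux (.boxedLit b) e₁ e₂) (cond b e₁ e₂)

theorem otyval_nostepM {Sg : GCtx} {w : Expr} (h : OTyVal w) :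
    ∀ {z : Expr}, StepM Sg w z → False := by
  induction h with
  | unit => intro z hs; cases hs
  | obool => intro z hs; cases hs
  | prod h₁ h₂ ih₁ ih₂ =>
    intro z hs
    cases hs with
    | prodTy₁ hs => exact ih₁ hs
    | prodTy₂ _ hs => exact ih₂ hs
  | osum h₁ h₂ ih₁ ih₂ =>
    intro z hs
    cases hs with
    | osumTy₁ hs => exact ih₁ hs
    | osumTy₂ _ hs => exact ih₂ hs

theorem oval_nostepM {Sg : GCtx} {v : Expr} (h : OVal v) :
    ∀ {z : Expr}, StepM Sg v z → False := by
  induction h with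
  | unit => intro z hs; cases hs
  | blit b => intro z hs; cases hs
  | pair h₁ h₂ ih₁ ih₂ =>
    intro z hs
    cases hs with
    | pairCtx₁ hs => exact ih₁ hs
    | pairCtx₂ _ hs => exact ih₂ hs
  | binj b hw hv => intro z hs; cases hs

theorem isval_nostepM {Sg : GCtx} {v : Expr} (h : IsVal v) :
    ∀ {z : Expr}, StepM Sg v z → False := by
  induction h with
  | ofOVal h => exact fun hs => oval_nostepM h hs
  | lit b => intro z hs; cases hs
  | pair h₁ h₂ ih₁ ih₂ =>
    intro z hs
    cases hs with
    | pairCtx₁ hs => exact ih₁ hs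
    | pairCtx₂ _ hs => exact ih₂ hs
  | psiPair h₁ h₂ ih₁ ih₂ =>
    intro z hs
    cases hs with
    | psiPairCtx₁ hs => exact ih₁ hs
    | psiPairCtx₂ _ hs => exact ih₂ hs
  | lam τ e => intro z hs; cases hs
  | ctor C h ih =>
    intro z hs
    cases hs with
    | ctorCtx hs => exact ih hs

theorem Step.toM {Sg : GCtx} {e e' : Expr} (h : Step Sg e e') : StepM Sg e e' := by
  induction h <;>
    solve_by_elim [StepM.gfun, StepM.oadtBeta, StepM.appBeta, StepM.letBeta,
      StepM.iteRed, StepM.muxRed, StepM.matchRed, StepM.projPair, StepM.projPsiPair,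
      StepM.secRed, StepM.oinjRed, StepM.omatchRed, StepM.prodTy₁, StepM.prodTy₂,
      StepM.osumTy₁, StepM.osumTy₂, StepM.letCtx, StepM.appArg, StepM.appFun,
      StepM.ctorCtx, StepM.oadtCtx, StepM.iteCtx, StepM.muxCtx₀, StepM.muxCtx₁,
      StepM.muxCtx₂, StepM.pairCtx₁, StepM.pairCtx₂, StepM.psiPairCtx₁,
      StepM.psiPairCtx₂, StepM.projCtx, StepM.oinjTy, StepM.oinjCtx, StepM.omatchCtx,
      StepM.matchCtx, StepM.secCtx]

private theorem orStep {R : Expr → Expr → Prop} (f : Expr → Expr)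
    (hf : ∀ {a b}, R a b → R (f a) (f b)) {x z : Expr} (h : x = z ∨ R x z) :
    f x = f z ∨ R (f x) (f z) :=
  h.imp (congrArg f) hf

set_option maxHeartbeats 2000000 in
theorem diamondM {Sg : GCtx} : ∀ {e x : Expr}, StepM Sg e x → ∀ y, StepM Sg e y →
    ∃ z, (x = z ∨ StepM Sg x z) ∧ (y = z ∨ StepM Sg y z) := by
  intro e x h1
  induction h1 with
  | gfun hx =>
    intro y h2
    cases h2 with
    | gfun hx' =>
      rw [hx] at hx'
      injection hx' with h
      injection h with h1 h2 h3
      exact ⟨_, Or.inl rfl, Or.inl h3.symm⟩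
  | oadtBeta hT hv =>
    intro y h2
    cases h2 with
    | oadtBeta hT' hv' =>
      rw [hT] at hT'
      injection hT' with h
      injection h with h1 h2
      exact ⟨_, Or.inl rfl, Or.inl (by rw [h2])⟩
    | oadtCtx hs => exact absurd hs (fun hs => isval_nostepM hv hs)
  | appBeta hv =>
    intro y h2
    cases h2 with
    | appBeta hv' => exact ⟨_, Or.inl rfl, Or.inl rfl⟩
    | appArg hs => exact absurd hs (fun hs => isval_nostepM hv hs)
    | appFun hv' hs => cases hs
  | letBeta hv =>
    intro y h2
    cases h2 with
    | letBeta hv' => exact ⟨_, Or.inl rfl, Or.inl rfl⟩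
    | letCtx hs => exact absurd hs (fun hs => isval_nostepM hv hs)
  | iteRed b =>
    intro y h2
    cases h2 with
    | iteRed => exact ⟨_, Or.inl rfl, Or.inl rfl⟩
    | iteCtx hs => cases hs
  | muxRed b hv₁ hv₂ =>
    intro y h2
    cases h2 with
    | muxRed => exact ⟨_, Or.inl rfl, Or.inl rfl⟩
    | muxCtx₀ hs => cases hs
    | muxCtx₁ _ hs => exact absurd hs (fun hs => isval_nostepM hv₁ hs)
    | muxCtx₂ _ _ hs => exact absurd hs (fun hs => isval_nostepM hv₂ hs)
    | muxLate => exact ⟨_, Or.inl rfl, Or.inl rfl⟩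
  | matchRed hv hfind =>
    intro y h2
    cases h2 with
    | matchRed hv' hfind' =>
      rw [hfind] at hfind'
      injection hfind' with h
      exact ⟨_, Or.inl rfl, Or.inl (by rw [h])⟩
    | matchCtx hs =>
      cases hs with
      | ctorCtx hs => exact absurd hs (fun hs => isval_nostepM hv hs)
  | projPair b hv₁ hv₂ =>
    intro y h2
    cases h2 with
    | projPair => exact ⟨_, Or.inl rfl, Or.inl rfl⟩
    | projCtx hs =>
      cases hs with
      | pairCtx₁ hs => exact absurd hs (fun hs => isval_nostepM hv₁ hs)
      | pairCtx₂ _ hs => exact absurd hs (fun hs => isval_nostepM hv₂ hs)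
  | projPsiPair b hv₁ hv₂ =>
    intro y h2
    cases h2 with
    | projPsiPair => exact ⟨_, Or.inl rfl, Or.inl rfl⟩
    | projCtx hs =>
      cases hs with
      | psiPairCtx₁ hs => exact absurd hs (fun hs => isval_nostepM hv₁ hs)
      | psiPairCtx₂ _ hs => exact absurd hs (fun hs => isval_nostepM hv₂ hs)
  | secRed b =>
    intro y h2
    cases h2 with
    | secRed => exact ⟨_, Or.inl rfl, Or.inl rfl⟩
    | secCtx hs => cases hs
  | oinjRed b hw hv =>
    intro y h2
    cases h2 with
    | oinjRed => exact ⟨_, Or.inl rfl, Or.inl rfl⟩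
    | oinjTy hs => exact absurd hs (fun hs => otyval_nostepM hw hs)
    | oinjCtx _ hs => exact absurd hs (fun hs => oval_nostepM hv hs)
  | @omatchRed v w₁ w₂ v₁ v₂ e₁ e₂ b hv hv₁ hv₂ =>
    intro y h2
    cases h2 with
    | omatchRed b hv' hv₁' hv₂' =>
      cases b with
      | true =>
        refine ⟨Expr.substE 0 v e₁, Or.inr ?_, Or.inr ?_⟩ <;>
          exact StepM.muxLate true
      | false =>
        refine ⟨Expr.substE 0 v e₂, Or.inr ?_, Or.inr ?_⟩ <;>
          exact StepM.muxLate false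
    | omatchCtx hs => cases hs
  | prodTy₁ hs ih =>
    intro y h2
    cases h2 with
    | prodTy₁ hs' =>
      obtain ⟨z, hz1, hz2⟩ := ih _ hs'
      exact ⟨_, orStep (Expr.prodTy · _) (fun h => StepM.prodTy₁ h) hz1,
        orStep (Expr.prodTy · _) (fun h => StepM.prodTy₁ h) hz2⟩
    | prodTy₂ hw _ => exact absurd hs (fun hs => otyval_nostepM hw hs)
  | prodTy₂ hw hs ih =>
    intro y h2
    cases h2 with
    | prodTy₁ hs' => exact absurd hs' (fun hs' => otyval_nostepM hw hs')
    | prodTy₂ hw' hs' =>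
      obtain ⟨z, hz1, hz2⟩ := ih _ hs'
      exact ⟨_, orStep (Expr.prodTy _ ·) (fun h => StepM.prodTy₂ hw h) hz1,
        orStep (Expr.prodTy _ ·) (fun h => StepM.prodTy₂ hw h) hz2⟩
  | osumTy₁ hs ih =>
    intro y h2
    cases h2 with
    | osumTy₁ hs' =>
      obtain ⟨z, hz1, hz2⟩ := ih _ hs'
      exact ⟨_, orStep (Expr.osumTy · _) (fun h => StepM.osumTy₁ h) hz1,
        orStep (Expr.osumTy · _) (fun h => StepM.osumTy₁ h) hz2⟩
    | osumTy₂ hw _ => exact absurd hs (fun hs => otyval_nostepM hw hs)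
  | osumTy₂ hw hs ih =>
    intro y h2
    cases h2 with
    | osumTy₁ hs' => exact absurd hs' (fun hs' => otyval_nostepM hw hs')
    | osumTy₂ hw' hs' =>
      obtain ⟨z, hz1, hz2⟩ := ih _ hs'
      exact ⟨_, orStep (Expr.osumTy _ ·) (fun h => StepM.osumTy₂ hw h) hz1,
        orStep (Expr.osumTy _ ·) (fun h => StepM.osumTy₂ hw h) hz2⟩
  | letCtx hs ih =>
    intro y h2
    cases h2 with
    | letBeta hv => exact absurd hs (fun hs => isval_nostepM hv hs)
    | letCtx hs' =>
      obtain ⟨z, hz1, hz2⟩ := ih _ hs'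
      exact ⟨_, orStep (Expr.letE · _) (fun h => StepM.letCtx h) hz1,
        orStep (Expr.letE · _) (fun h => StepM.letCtx h) hz2⟩
  | appArg hs ih =>
    intro y h2
    cases h2 with
    | appBeta hv => exact absurd hs (fun hs => isval_nostepM hv hs)
    | appArg hs' =>
      obtain ⟨z, hz1, hz2⟩ := ih _ hs'
      exact ⟨_, orStep (Expr.app _ ·) (fun h => StepM.appArg h) hz1,
        orStep (Expr.app _ ·) (fun h => StepM.appArg h) hz2⟩
    | appFun hv _ => exact absurd hs (fun hs => isval_nostepM hv hs)
  | appFun hv hs ih =>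
    intro y h2
    cases h2 with
    | appBeta hv' => cases hs
    | appArg hs' => exact absurd hs' (fun hs' => isval_nostepM hv hs')
    | appFun hv' hs' =>
      obtain ⟨z, hz1, hz2⟩ := ih _ hs'
      exact ⟨_, orStep (Expr.app · _) (fun h => StepM.appFun hv h) hz1,
        orStep (Expr.app · _) (fun h => StepM.appFun hv h) hz2⟩
  | ctorCtx hs ih =>
    intro y h2
    cases h2 with
    | ctorCtx hs' =>
      obtain ⟨z, hz1, hz2⟩ := ih _ hs'
      exact ⟨_, orStep (Expr.ctor _ ·) (fun h => StepM.ctorCtx h) hz1,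
        orStep (Expr.ctor _ ·) (fun h => StepM.ctorCtx h) hz2⟩
  | oadtCtx hs ih =>
    intro y h2
    cases h2 with
    | oadtBeta _ hv => exact absurd hs (fun hs => isval_nostepM hv hs)
    | oadtCtx hs' =>
      obtain ⟨z, hz1, hz2⟩ := ih _ hs'
      exact ⟨_, orStep (Expr.oadt _ ·) (fun h => StepM.oadtCtx h) hz1,
        orStep (Expr.oadt _ ·) (fun h => StepM.oadtCtx h) hz2⟩
  | iteCtx hs ih =>
    intro y h2
    cases h2 with
    | iteRed => cases hs
    | iteCtx hs' =>
      obtain ⟨z, hz1, hz2⟩ := ih _ hs'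
      exact ⟨_, orStep (Expr.ite · _ _) (fun h => StepM.iteCtx h) hz1,
        orStep (Expr.ite · _ _) (fun h => StepM.iteCtx h) hz2⟩
  | muxCtx₀ hs ih =>
    intro y h2
    cases h2 with
    | muxRed => cases hs
    | muxCtx₀ hs' =>
      obtain ⟨z, hz1, hz2⟩ := ih _ hs'
      exact ⟨_, orStep (Expr.mux · _ _) (fun h => StepM.muxCtx₀ h) hz1,
        orStep (Expr.mux · _ _) (fun h => StepM.muxCtx₀ h) hz2⟩
    | muxCtx₁ hv _ => exact absurd hs (fun hs => isval_nostepM hv hs)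
    | muxCtx₂ hv _ _ => exact absurd hs (fun hs => isval_nostepM hv hs)
    | muxLate => cases hs
  | @muxCtx₁ v₀ e₁ e₁' e₂ hv₀ hs ih =>
    intro y h2
    cases h2 with
    | muxRed _ hv₁ _ => exact absurd hs (fun hs => isval_nostepM hv₁ hs)
    | muxCtx₀ hs' => exact absurd hs' (fun hs' => isval_nostepM hv₀ hs')
    | muxCtx₁ _ hs' =>
      obtain ⟨z, hz1, hz2⟩ := ih _ hs'
      exact ⟨_, orStep (Expr.mux _ · _) (fun h => StepM.muxCtx₁ hv₀ h) hz1,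
        orStep (Expr.mux _ · _) (fun h => StepM.muxCtx₁ hv₀ h) hz2⟩
    | muxCtx₂ _ hv₁ _ => exact absurd hs (fun hs => isval_nostepM hv₁ hs)
    | @muxLate _ _ b =>
      cases b with
      | true => exact ⟨e₁', Or.inr (StepM.muxLate true), Or.inr hs⟩
      | false => exact ⟨e₂, Or.inr (StepM.muxLate false), Or.inl rfl⟩
  | @muxCtx₂ v₀ v₁ e₂ e₂' hv₀ hv₁ hs ih =>
    intro y h2
    cases h2 with
    | muxRed _ _ hv₂ => exact absurd hs (fun hs => isval_nostepM hv₂ hs)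
    | muxCtx₀ hs' => exact absurd hs' (fun hs' => isval_nostepM hv₀ hs')
    | muxCtx₁ _ hs' => exact absurd hs' (fun hs' => isval_nostepM hv₁ hs')
    | muxCtx₂ _ _ hs' =>
      obtain ⟨z, hz1, hz2⟩ := ih _ hs'
      exact ⟨_, orStep (Expr.mux _ _ ·) (fun h => StepM.muxCtx₂ hv₀ hv₁ h) hz1,
        orStep (Expr.mux _ _ ·) (fun h => StepM.muxCtx₂ hv₀ hv₁ h) hz2⟩
    | @muxLate _ _ b =>
      cases b with
      | true => exact ⟨v₁, Or.inr (StepM.muxLate true), Or.inl rfl⟩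
      | false => exact ⟨e₂', Or.inr (StepM.muxLate false), Or.inr hs⟩
  | pairCtx₁ hs ih =>
    intro y h2
    cases h2 with
    | pairCtx₁ hs' =>
      obtain ⟨z, hz1, hz2⟩ := ih _ hs'
      exact ⟨_, orStep (Expr.pair · _) (fun h => StepM.pairCtx₁ h) hz1,
        orStep (Expr.pair · _) (fun h => StepM.pairCtx₁ h) hz2⟩
    | pairCtx₂ hv _ => exact absurd hs (fun hs => isval_nostepM hv hs)
  | pairCtx₂ hv hs ih =>
    intro y h2
    cases h2 with
    | pairCtx₁ hs' => exact absurd hs' (fun hs' => isval_nostepM hv hs')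
    | pairCtx₂ _ hs' =>
      obtain ⟨z, hz1, hz2⟩ := ih _ hs'
      exact ⟨_, orStep (Expr.pair _ ·) (fun h => StepM.pairCtx₂ hv h) hz1,
        orStep (Expr.pair _ ·) (fun h => StepM.pairCtx₂ hv h) hz2⟩
  | psiPairCtx₁ hs ih =>
    intro y h2
    cases h2 with
    | psiPairCtx₁ hs' =>
      obtain ⟨z, hz1, hz2⟩ := ih _ hs'
      exact ⟨_, orStep (Expr.psiPair · _) (fun h => StepM.psiPairCtx₁ h) hz1,
        orStep (Expr.psiPair · _) (fun h => StepM.psiPairCtx₁ h) hz2⟩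
    | psiPairCtx₂ hv _ => exact absurd hs (fun hs => isval_nostepM hv hs)
  | psiPairCtx₂ hv hs ih =>
    intro y h2
    cases h2 with
    | psiPairCtx₁ hs' => exact absurd hs' (fun hs' => isval_nostepM hv hs')
    | psiPairCtx₂ _ hs' =>
      obtain ⟨z, hz1, hz2⟩ := ih _ hs'
      exact ⟨_, orStep (Expr.psiPair _ ·) (fun h => StepM.psiPairCtx₂ hv h) hz1,
        orStep (Expr.psiPair _ ·) (fun h => StepM.psiPairCtx₂ hv h) hz2⟩
  | projCtx hs ih =>
    intro y h2
    cases h2 with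
    | projPair _ hv₁ hv₂ =>
      exact absurd hs (fun hs => isval_nostepM (IsVal.pair hv₁ hv₂) hs)
    | projPsiPair _ hv₁ hv₂ =>
      exact absurd hs (fun hs => isval_nostepM (IsVal.psiPair hv₁ hv₂) hs)
    | projCtx hs' =>
      obtain ⟨z, hz1, hz2⟩ := ih _ hs'
      exact ⟨_, orStep (Expr.proj _ ·) (fun h => StepM.projCtx h) hz1,
        orStep (Expr.proj _ ·) (fun h => StepM.projCtx h) hz2⟩
  | oinjTy hs ih =>
    intro y h2
    cases h2 with
    | oinjRed _ hw _ => exact absurd hs (fun hs => otyval_nostepM hw hs)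
    | oinjTy hs' =>
      obtain ⟨z, hz1, hz2⟩ := ih _ hs'
      exact ⟨_, orStep (Expr.oinj _ · _) (fun h => StepM.oinjTy h) hz1,
        orStep (Expr.oinj _ · _) (fun h => StepM.oinjTy h) hz2⟩
    | oinjCtx hw _ => exact absurd hs (fun hs => otyval_nostepM hw hs)
  | oinjCtx hw hs ih =>
    intro y h2
    cases h2 with
    | oinjRed _ _ hv => exact absurd hs (fun hs => oval_nostepM hv hs)
    | oinjTy hs' => exact absurd hs' (fun hs' => otyval_nostepM hw hs')
    | oinjCtx _ hs' =>
      obtain ⟨z, hz1, hz2⟩ := ih _ hs'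
      exact ⟨_, orStep (Expr.oinj _ _ ·) (fun h => StepM.oinjCtx hw h) hz1,
        orStep (Expr.oinj _ _ ·) (fun h => StepM.oinjCtx hw h) hz2⟩
  | omatchCtx hs ih =>
    intro y h2
    cases h2 with
    | omatchRed => cases hs
    | omatchCtx hs' =>
      obtain ⟨z, hz1, hz2⟩ := ih _ hs'
      exact ⟨_, orStep (Expr.omatch · _ _) (fun h => StepM.omatchCtx h) hz1,
        orStep (Expr.omatch · _ _) (fun h => StepM.omatchCtx h) hz2⟩
  | matchCtx hs ih =>
    intro y h2
    cases h2 with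
    | matchRed hv _ =>
      cases hs with
      | ctorCtx hs => exact absurd hs (fun hs => isval_nostepM hv hs)
    | matchCtx hs' =>
      obtain ⟨z, hz1, hz2⟩ := ih _ hs'
      exact ⟨_, orStep (Expr.matchE · _) (fun h => StepM.matchCtx h) hz1,
        orStep (Expr.matchE · _) (fun h => StepM.matchCtx h) hz2⟩
  | secCtx hs ih =>
    intro y h2
    cases h2 with
    | secRed => cases hs
    | secCtx hs' =>
      obtain ⟨z, hz1, hz2⟩ := ih _ hs'
      exact ⟨_, orStep (Expr.boolSec ·) (fun h => StepM.secCtx h) hz1,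
        orStep (Expr.boolSec ·) (fun h => StepM.secCtx h) hz2⟩
  | @muxLate e₁ e₂ b =>
    intro y h2
    cases h2 with
    | muxRed => exact ⟨_, Or.inl rfl, Or.inl rfl⟩
    | muxCtx₀ hs => cases hs
    | @muxCtx₁ _ _ e₁' _ _ hs =>
      cases b with
      | true => exact ⟨e₁', Or.inr hs, Or.inr (StepM.muxLate true)⟩
      | false => exact ⟨e₂, Or.inl rfl, Or.inr (StepM.muxLate false)⟩
    | @muxCtx₂ _ _ _ e₂' _ hv₁ hs =>
      cases b with
      | true => exact ⟨e₁, Or.inl rfl, Or.inr (StepM.muxLate true)⟩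
      | false => exact ⟨e₂', Or.inr hs, Or.inr (StepM.muxLate false)⟩
    | muxLate => exact ⟨_, Or.inl rfl, Or.inl rfl⟩

end Taypsi

namespace Taypsi

abbrev MStar (Sg : GCtx) : Expr → Expr → Prop := Relation.ReflTransGen (StepM Sg)

theorem mstar_eqvGen {Sg : GCtx} {a b : Expr} (h : MStar Sg a b) :
    Relation.EqvGen (StepM Sg) a b := by
  induction h with
  | refl => exact Relation.EqvGen.refl _
  | tail h₁ h₂ ih => exact ih.trans _ _ _ (Relation.EqvGen.rel _ _ h₂)

theorem eqvGen_join {Sg : GCtx} {a b : Expr} (h : Relation.EqvGen (StepM Sg) a b) :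
    Relation.Join (MStar Sg) a b := by
  have heq : Equivalence (Relation.Join (MStar Sg)) := by
    apply Relation.equivalence_join_reflTransGen
    intro a b c h1 h2
    obtain ⟨d, hd1, hd2⟩ := diamondM h1 _ h2
    refine ⟨d, ?_, ?_⟩
    · rcases hd1 with rfl | hd1
      · exact Relation.ReflGen.refl
      · exact Relation.ReflGen.single hd1
    · rcases hd2 with rfl | hd2
      · exact Relation.ReflTransGen.refl
      · exact Relation.ReflTransGen.single hd2
  have h' : Relation.EqvGen (Relation.Join (MStar Sg)) a b :=
    Relation.EqvGen.mono
      (fun a b h => ⟨b, Relation.ReflTransGen.single h, Relation.ReflTransGen.refl⟩) _ _ h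
  exact (heq.eqvGen_iff).mp h'

theorem mstar_rigid {Sg : GCtx} {t z : Expr} (hr : ∀ u, StepM Sg t u → False)
    (h : MStar Sg t z) : z = t := by
  induction h with
  | refl => rfl
  | tail h₁ h₂ ih => exact absurd (ih ▸ h₂) (hr _)

theorem mstar_prod {Sg : GCtx} {a b z : Expr} (h : MStar Sg (.prodTy a b) z) :
    ∃ a' b', z = .prodTy a' b' ∧ MStar Sg a a' ∧ MStar Sg b b' := by
  induction h with
  | refl => exact ⟨a, b, rfl, Relation.ReflTransGen.refl, Relation.ReflTransGen.refl⟩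
  | tail h₁ h₂ ih =>
    obtain ⟨a', b', rfl, ha, hb⟩ := ih
    cases h₂ with
    | prodTy₁ hs => exact ⟨_, _, rfl, ha.tail hs, hb⟩
    | prodTy₂ _ hs => exact ⟨_, _, rfl, ha, hb.tail hs⟩

theorem mstar_osum {Sg : GCtx} {a b z : Expr} (h : MStar Sg (.osumTy a b) z) :
    ∃ a' b', z = .osumTy a' b' := by
  induction h with
  | refl => exact ⟨a, b, rfl⟩
  | tail h₁ h₂ ih =>
    obtain ⟨a', b', rfl⟩ := ih
    cases h₂ with
    | osumTy₁ hs => exact ⟨_, _, rfl⟩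
    | osumTy₂ _ hs => exact ⟨_, _, rfl⟩

theorem toExpr_nostepM {Sg : GCtx} : ∀ (η : SimpleTy) {z : Expr},
    StepM Sg η.toExpr z → False := by
  intro η
  induction η with
  | unit => intro z h; cases h
  | bool => intro z h; cases h
  | adt T => intro z h; cases h
  | prod η₁ η₂ ih₁ ih₂ =>
    intro z h
    cases h with
    | prodTy₁ hs => exact ih₁ hs
    | prodTy₂ _ hs => exact ih₂ hs
  | arrow η₁ η₂ ih₁ ih₂ => intro z h; cases h

theorem mstar_toExpr {Sg : GCtx} {η : SimpleTy} {z : Expr}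
    (h : MStar Sg η.toExpr z) : z = η.toExpr :=
  mstar_rigid (fun _ hs => toExpr_nostepM η hs) h

theorem tyEquiv_mstar {Sg : GCtx} {τ τ' : Expr} {η : SimpleTy} (he : TyEquiv Sg τ τ')
    (hm : MStar Sg τ' η.toExpr) : MStar Sg τ η.toExpr := by
  have h1 : Relation.EqvGen (StepM Sg) τ τ' :=
    Relation.EqvGen.mono (fun _ _ h => h.toM) _ _ he
  obtain ⟨c, hc1, hc2⟩ := eqvGen_join (h1.trans _ _ _ (mstar_eqvGen hm))
  rw [mstar_toExpr hc2] at hc1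
  exact hc1

theorem toExpr_unit_inv : ∀ {η : SimpleTy}, η.toExpr = .unitTy → η = .unit := by
  intro η h; cases η <;> simp_all [SimpleTy.toExpr]

theorem toExpr_bool_inv : ∀ {η : SimpleTy}, η.toExpr = .boolTy → η = .bool := by
  intro η h; cases η <;> simp_all [SimpleTy.toExpr]

theorem toExpr_adt_inv : ∀ {η : SimpleTy} {T}, η.toExpr = .adTy T → η = .adt T := by
  intro η T h; cases η <;> simp_all [SimpleTy.toExpr]

theorem toExpr_prod_inv : ∀ {η : SimpleTy} {A B}, η.toExpr = .prodTy A B →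
    ∃ η₁ η₂, η = .prod η₁ η₂ ∧ η₁.toExpr = A ∧ η₂.toExpr = B := by
  intro η A B h
  cases η with
  | prod η₁ η₂ =>
    injection h with h1 h2
    exact ⟨η₁, η₂, rfl, h1, h2⟩
  | unit => exact absurd h (by simp [SimpleTy.toExpr])
  | bool => exact absurd h (by simp [SimpleTy.toExpr])
  | adt T => exact absurd h (by simp [SimpleTy.toExpr])
  | arrow η₁ η₂ => exact absurd h (by simp [SimpleTy.toExpr])

theorem toExpr_pi_inv : ∀ {η : SimpleTy} {A B}, η.toExpr = .piTy A B →
    ∃ η₁ η₂, η = .arrow η₁ η₂ := by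
  intro η A B h
  cases η with
  | arrow η₁ η₂ => exact ⟨η₁, η₂, rfl⟩
  | unit => exact absurd h (by simp [SimpleTy.toExpr])
  | bool => exact absurd h (by simp [SimpleTy.toExpr])
  | adt T => exact absurd h (by simp [SimpleTy.toExpr])
  | prod η₁ η₂ => exact absurd h (by simp [SimpleTy.toExpr])

theorem toExpr_ne_obool : ∀ (η : SimpleTy), η.toExpr ≠ .oboolTy := by
  intro η; cases η <;> simp [SimpleTy.toExpr]

theorem toExpr_ne_psi : ∀ (η : SimpleTy) (T : GName), η.toExpr ≠ .psiTy T := by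
  intro η T; cases η <;> simp [SimpleTy.toExpr]

theorem toExpr_ne_osum : ∀ (η : SimpleTy) (a b : Expr), η.toExpr ≠ .osumTy a b := by
  intro η a b; cases η <;> simp [SimpleTy.toExpr]

theorem Kind.le_trans {a b c : Kind} (h1 : Kind.le a b) (h2 : Kind.le b c) :
    Kind.le a c := by
  cases h1 with
  | refl => exact h2
  | bot => exact Kind.le.bot _
  | top =>
    cases h2 with
    | refl => exact Kind.le.top _
    | top => exact Kind.le.top _

theorem kinding_pi_mixed {lk Sg Γ t κ} (h : Kinding lk Sg Γ t κ) :
    ∀ a b, t = Expr.piTy a b → κ = Kind.mixed := by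
  induction h using Kinding.rec (motive_1 := fun _ _ _ _ _ _ => True) with
  | sub h hle ih =>
    intro a b heq
    have hm := ih a b heq
    subst hm
    cases hle with
    | refl => rfl
    | top => rfl
  | pi => intros; rfl
  | _ => first
    | trivial
    | (intros; simp_all)

theorem kinding_prod_pub {lk Sg Γ t κ} (h : Kinding lk Sg Γ t κ) :
    ∀ a b, t = Expr.prodTy a b → Kind.le κ .pub →
      Kinding lk Sg Γ a .pub ∧ Kinding lk Sg Γ b .pub := by
  induction h using Kinding.rec (motive_1 := fun _ _ _ _ _ _ => True) with
  | sub h hle ih =>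
    intro a b heq hle'
    exact ih a b heq (Kind.le_trans hle hle')
  | prod h₁ h₂ ih₁ ih₂ =>
    intro a b heq hle
    injection heq with e1 e2
    subst e1; subst e2
    exact ⟨Kinding.sub h₁ hle, Kinding.sub h₂ hle⟩
  | _ => first
    | trivial
    | (intros; simp_all)

theorem isval_pair_inv {v₁ v₂ : Expr} (h : IsVal (.pair v₁ v₂)) :
    IsVal v₁ ∧ IsVal v₂ := by
  cases h with
  | ofOVal h =>
    cases h with
    | pair h₁ h₂ => exact ⟨.ofOVal h₁, .ofOVal h₂⟩
  | pair h₁ h₂ => exact ⟨h₁, h₂⟩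

/-- The canonical shape of a closed value of a public simple type. -/
def Canon (Sg : GCtx) (lk : Bool) (Γ : List Expr) : Expr → SimpleTy → Prop
  | v, .unit => v = .unit
  | v, .bool => ∃ b, v = .lit b
  | v, .adt T => Typing lk Sg Γ v (.adTy T)
  | v, .prod η₁ η₂ => ∃ v₁ v₂, v = .pair v₁ v₂ ∧ IsVal v₁ ∧ IsVal v₂ ∧
      Canon Sg lk Γ v₁ η₁ ∧ Canon Sg lk Γ v₂ η₂
  | _, .arrow _ _ => True

theorem canonical {Sg : GCtx} {lk : Bool} {Γ : List Expr} {v τ : Expr}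
    (ht : Typing lk Sg Γ v τ) :
    IsVal v → ∀ η : SimpleTy, MStar Sg τ η.toExpr → Canon Sg lk Γ v η := by
  refine Typing.rec
    (motive_1 := fun lk Sg Γ v τ _ =>
      IsVal v → ∀ η : SimpleTy, MStar Sg τ η.toExpr → Canon Sg lk Γ v η)
    (motive_2 := fun _ _ _ _ _ _ => True)
    ?c1 ?c2 ?c3 ?c4 ?c5 ?c6 ?c7 ?c8 ?c9 ?c10 ?c11 ?c12 ?c13 ?c14 ?c15 ?c16 ?c17
    ?c18 ?c19 ?c20 ?c21 ?c22 ?k1 ?k2 ?k3 ?k4 ?k5 ?k6 ?k7 ?k8 ?k9 ?k10 ?k11 ?k12 ?k13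
    ht
  case c1 => -- conv
    intros; rename_i hv η hm; rename_i he hk ih ihk
    exact ih hv η (tyEquiv_mstar he hm)
  case c2 => -- unit
    intros; rename_i hv η hm
    rw [toExpr_unit_inv (mstar_rigid (fun _ hs => by cases hs) hm)]
    exact rfl
  case c3 => -- lit
    intros; rename_i hv η hm; rename_i b
    rw [toExpr_bool_inv (mstar_rigid (fun _ hs => by cases hs) hm)]
    exact ⟨b, rfl⟩
  case c4 => -- var
    intros; rename_i hv η hm
    cases hv with | ofOVal hov => cases hov
  case c5 => -- gfun
    intros; rename_i hv η hm
    cases hv with | ofOVal hov => cases hov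
  case c6 => -- abs
    intros; rename_i hv η hm
    obtain ⟨η₁, η₂, rfl⟩ := toExpr_pi_inv (mstar_rigid (fun _ hs => by cases hs) hm)
    trivial
  case c7 => -- app
    intros; rename_i hv η hm
    cases hv with | ofOVal hov => cases hov
  case c8 => -- letE
    intros; rename_i hv η hm
    cases hv with | ofOVal hov => cases hov
  case c9 => -- pair
    intros; rename_i hv η hm; rename_i ih₁ ih₂
    obtain ⟨A, B, hAB, hA, hB⟩ := mstar_prod hm
    obtain ⟨η₁, η₂, rfl, e1, e2⟩ := toExpr_prod_inv hAB
    obtain ⟨hv₁, hv₂⟩ := isval_pair_inv hv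
    exact ⟨_, _, rfl, hv₁, hv₂, ih₁ hv₁ η₁ (by rw [e1]; exact hA),
      ih₂ hv₂ η₂ (by rw [e2]; exact hB)⟩
  case c10 => -- proj
    intros; rename_i hv η hm
    cases hv with | ofOVal hov => cases hov
  case c11 => -- ite
    intros; rename_i hv η hm
    cases hv with | ofOVal hov => cases hov
  case c12 => -- ctor
    intros; rename_i hv η hm; rename_i hC h ih
    obtain rfl := toExpr_adt_inv (mstar_rigid (fun _ hs => by cases hs) hm)
    exact Typing.ctor hC h
  case c13 => -- matchE
    intros; rename_i hv η hm
    cases hv with | ofOVal hov => cases hov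
  case c14 => -- psiPair
    intros; rename_i hv η hm
    exact absurd (mstar_rigid (fun _ hs => by cases hs) hm) (toExpr_ne_psi η _)
  case c15 => -- psiProj₁
    intros; rename_i hv η hm
    cases hv with | ofOVal hov => cases hov
  case c16 => -- psiProj₂
    intros; rename_i hv η hm
    cases hv with | ofOVal hov => cases hov
  case c17 => -- mux
    intros; rename_i hv η hm
    cases hv with | ofOVal hov => cases hov
  case c18 => -- oinj
    intros; rename_i hv η hm
    cases hv with | ofOVal hov => cases hov
  case c19 => -- omatch
    intros; rename_i hv η hm
    cases hv with | ofOVal hov => cases hov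
  case c20 => -- boolSec
    intros; rename_i hv η hm
    cases hv with | ofOVal hov => cases hov
  case c21 => -- boxedLit
    intros; rename_i hv η hm
    exact absurd (mstar_rigid (fun _ hs => by cases hs) hm) (toExpr_ne_obool η)
  case c22 => -- boxedInj
    intros; rename_i hv η hm; rename_i hov
    cases hov with
    | osum b hw₁ hw₂ hv' =>
      obtain ⟨a', b', hab⟩ := mstar_osum hm
      exact absurd hab (toExpr_ne_osum η _ _)
  all_goals first
    | exact trivial
    | (intros; trivial)

theorem erase_toSpec (S : StructCtx) : ∀ η : SimpleTy, erase S η.toSpec = η := by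
  intro η; induction η <;> simp_all [SimpleTy.toSpec, erase]

theorem toSpec_toExpr : ∀ η : SimpleTy, SpecTy.toExpr η.toSpec = η.toExpr := by
  intro η
  induction η <;> simp_all [SimpleTy.toSpec, SpecTy.toExpr, SimpleTy.toExpr]

theorem canonInterp {S : StructCtx} {Sg : GCtx} :
    ∀ η : SimpleTy, Kinding false Sg [] η.toExpr .pub →
      ∀ v, IsVal v → Canon Sg false [] v η →
        Typing false Sg [] v η.toExpr ∧ ∀ n, interpV S Sg η.toSpec n v v := by
  intro η
  induction η with
  | unit =>
    rintro hk v hv rfl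
    exact ⟨Typing.unit, fun n => ⟨⟨hv, hv, Typing.unit, Typing.unit⟩, fun _ => rfl⟩⟩
  | bool =>
    rintro hk v hv ⟨b, rfl⟩
    exact ⟨Typing.lit b, fun n => ⟨⟨hv, hv, Typing.lit b, Typing.lit b⟩, fun _ => rfl⟩⟩
  | adt T =>
    rintro hk v hv ht
    exact ⟨ht, fun n => ⟨⟨hv, hv, ht, ht⟩, fun _ => rfl⟩⟩
  | prod η₁ η₂ ih₁ ih₂ =>
    rintro hk v hv ⟨v₁, v₂, rfl, hv₁, hv₂, c₁, c₂⟩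
    obtain ⟨k₁, k₂⟩ := kinding_prod_pub hk _ _ rfl (Kind.le.refl _)
    obtain ⟨t₁, i₁⟩ := ih₁ k₁ v₁ hv₁ c₁
    obtain ⟨t₂, i₂⟩ := ih₂ k₂ v₂ hv₂ c₂
    refine ⟨Typing.pair t₁ t₂, fun n =>
      ⟨⟨hv, hv, ?_, ?_⟩, v₁, v₂, v₁, v₂, rfl, rfl, i₁ n, i₂ n⟩⟩
    · show Typing false Sg [] (Expr.pair v₁ v₂)
        ((SimpleTy.prod (erase S η₁.toSpec) (erase S η₂.toSpec)).toExpr)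
      rw [erase_toSpec, erase_toSpec]
      exact Typing.pair t₁ t₂
    · show Typing false Sg [] (Expr.pair v₁ v₂)
        (Expr.prodTy (SpecTy.toExpr η₁.toSpec) (SpecTy.toExpr η₂.toSpec))
      rw [toSpec_toExpr, toSpec_toExpr]
      exact Typing.pair t₁ t₂
  | arrow η₁ η₂ ih₁ ih₂ =>
    intro hk
    exact absurd (kinding_pi_mixed hk _ _ rfl) (fun h => Kind.noConfusion h)

theorem interpBack {S : StructCtx} {Sg : GCtx} :
    ∀ η : SimpleTy, Kinding false Sg [] η.toExpr .pub →
      ∀ (n : ℕ) (v v' : Expr), 0 < n → interpV S Sg η.toSpec n v v' → v = v' := by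
  intro η
  induction η with
  | unit => exact fun hk n v v' hn h => h.2 hn
  | bool => exact fun hk n v v' hn h => h.2 hn
  | adt T => exact fun hk n v v' hn h => h.2 hn
  | prod η₁ η₂ ih₁ ih₂ =>
    intro hk n v v' hn h
    obtain ⟨k₁, k₂⟩ := kinding_prod_pub hk _ _ rfl (Kind.le.refl _)
    obtain ⟨_, v₁, v₂, v₁', v₂', rfl, rfl, h₁, h₂⟩ := h
    rw [ih₁ k₁ n v₁ v₁' hn h₁, ih₂ k₂ n v₂ v₂' hn h₂]
  | arrow η₁ η₂ ih₁ ih₂ =>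
    intro hk
    exact absurd (kinding_pi_mixed hk _ _ rfl) (fun h => Kind.noConfusion h)

end Taypsi

namespace Taypsi

/-- **Values of public types are self-related by the logical relation**: if a
simple type `η` has public kind, every closed value of type `η` is related to
itself at every step index; conversely, related values at a positive index are
equal. -/
theorem public_type_interpV (S : StructCtx) (Sg : GCtx) (hSg : GCtxWT Sg)
    (hS : StructCtxOK S Sg) (η : SimpleTy)
    (hk : Kinding false Sg [] η.toExpr .pub) :
    (∀ v : Expr, IsVal v → Typing false Sg [] v η.toExpr →
      ∀ n : ℕ, interpV S Sg η.toSpec n v v) ∧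
    (∀ (n : ℕ) (v v' : Expr), 0 < n → interpV S Sg η.toSpec n v v' → v = v') := by
  constructor
  · intro v hv ht n
    exact (canonInterp η hk v hv (canonical ht hv η Relation.ReflTransGen.refl)).2 n
  · exact fun n v v' hn h => interpBack η hk n v v' hn h


end Taypsi
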